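/- arXiv:1211.2067 — 4 statements merged into one kernel-verified Lean document; each statement's English description precedes it below -/
import Mathlib

section
/- (Kelvin circulation conservation for the Sliced Compressible Model.) Suppose the smooth fields u_S = (u,w), u_T, θ_S, D satisfy the SCM system (C1)–(C4). Then for every loop c advected by u_S, the circulation I(t) := ∫₀¹ [ s u_S − (u_T + f x)∇θ_S ](t, c(t,σ)) · ∂_σ c(t,σ) dσ is constant in t. -/
noncomputable section

/-- Partial derivative in the first (x) coordinate of a planar scalar field. -/
def px (f : ℝ × ℝ → ℝ) (p : ℝ × ℝ) : ℝ := deriv (fun x => f (x, p.2)) p.1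

/-- Partial derivative in the second (z) coordinate of a planar scalar field. -/
def pz (f : ℝ × ℝ → ℝ) (p : ℝ × ℝ) : ℝ := deriv (fun z => f (p.1, z)) p.2

/-- Time derivative of a time-dependent scalar field. -/
def pt (f : ℝ → ℝ × ℝ → ℝ) (t : ℝ) (p : ℝ × ℝ) : ℝ := deriv (fun s => f s p) t

/-- Smoothness (C^∞, jointly in time and space) of a time-dependent scalar field. -/
def SmoothS (f : ℝ → ℝ × ℝ → ℝ) : Prop :=
  ContDiff ℝ (⊤ : ℕ∞) (fun q : ℝ × (ℝ × ℝ) => f q.1 q.2)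

/-- Smoothness of a time-dependent planar vector field. -/
def SmoothV (u : ℝ → ℝ × ℝ → ℝ × ℝ) : Prop :=
  ContDiff ℝ (⊤ : ℕ∞) (fun q : ℝ × (ℝ × ℝ) => u q.1 q.2)

/-- First component of a time-dependent planar vector field. -/
def c1 (v : ℝ → ℝ × ℝ → ℝ × ℝ) : ℝ → ℝ × ℝ → ℝ := fun t p => (v t p).1

/-- Second component of a time-dependent planar vector field. -/
def c2 (v : ℝ → ℝ × ℝ → ℝ × ℝ) : ℝ → ℝ × ℝ → ℝ := fun t p => (v t p).2

/-- Advective derivative u·∇f of a time-dependent scalar field f along u. -/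
def adv (u : ℝ → ℝ × ℝ → ℝ × ℝ) (f : ℝ → ℝ × ℝ → ℝ) (t : ℝ) (p : ℝ × ℝ) : ℝ :=
  (u t p).1 * px (f t) p + (u t p).2 * pz (f t) p

/-- First component of (∇u)ᵀ v, i.e. Σⱼ vʲ ∂ₓ uʲ. -/
def gradT1 (u v : ℝ → ℝ × ℝ → ℝ × ℝ) (t : ℝ) (p : ℝ × ℝ) : ℝ :=
  (v t p).1 * px (c1 u t) p + (v t p).2 * px (c2 u t) p

/-- Second component of (∇u)ᵀ v, i.e. Σⱼ vʲ ∂_z uʲ. -/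
def gradT2 (u v : ℝ → ℝ × ℝ → ℝ × ℝ) (t : ℝ) (p : ℝ × ℝ) : ℝ :=
  (v t p).1 * pz (c1 u t) p + (v t p).2 * pz (c2 u t) p

/-- Planar dot product. -/
def dot (a b : ℝ × ℝ) : ℝ := a.1 * b.1 + a.2 * b.2

/-- A loop (σ ↦ c t σ, closed at σ = 0, 1) advected by the velocity field u. -/
def AdvectedLoop (u : ℝ → ℝ × ℝ → ℝ × ℝ) (c : ℝ → ℝ → ℝ × ℝ) : Prop :=
  ContDiff ℝ (⊤ : ℕ∞) (fun q : ℝ × ℝ => c q.1 q.2) ∧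
  (∀ t, c t 0 = c t 1) ∧
  (∀ t σ, HasDerivAt (fun τ => c τ σ) (u t (c t σ)) t)


namespace SCMK
abbrev E2 : Type := ℝ × (ℝ × ℝ)
def eT : E2 := (1, (0, 0))
def eX : E2 := (0, (1, 0))
def eZ : E2 := (0, (0, 1))
def pd (v : E2) (G : E2 → ℝ) : E2 → ℝ := fun q => fderiv ℝ G q v

section lines
variable {F : Type*} [NormedAddCommGroup F] [NormedSpace ℝ F]
theorem hd_comp {E : Type*} [NormedAddCommGroup E] [NormedSpace ℝ E]
    {G : E → F} (hG : ContDiff ℝ (⊤ : ℕ∞) G) {γ : ℝ → E} {v : E} {x : ℝ}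
    (hγ : HasDerivAt γ v x) :
    HasDerivAt (fun τ => G (γ τ)) (fderiv ℝ G (γ x) v) x :=
  (hG.differentiable (by simp) (γ x)).hasFDerivAt.comp_hasDerivAt x hγ
theorem smooth_pdv {E : Type*} [NormedAddCommGroup E] [NormedSpace ℝ E]
    {G : E → F} (hG : ContDiff ℝ (⊤ : ℕ∞) G) (v : E) :
    ContDiff ℝ (⊤ : ℕ∞) (fun q => fderiv ℝ G q v) :=
  (hG.fderiv_right (by simp)).clm_apply contDiff_const
theorem fderiv_swap {E : Type*} [NormedAddCommGroup E] [NormedSpace ℝ E]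
    {G : E → F} (hG : ContDiff ℝ (⊤ : ℕ∞) G) (q v w : E) :
    fderiv ℝ (fun y => fderiv ℝ G y v) q w = fderiv ℝ (fun y => fderiv ℝ G y w) q v := by
  have hdG : Differentiable ℝ (fderiv ℝ G) := (hG.fderiv_right (m := (⊤ : ℕ∞)) (by simp)).differentiable (by simp)
  have hsymm := second_derivative_symmetric (f := G) (f' := fderiv ℝ G)
      (f'' := fderiv ℝ (fderiv ℝ G) q)
      (fun y => (hG.differentiable (by simp) y).hasFDerivAt) (hdG q).hasFDerivAt
  have expand : ∀ u : E, fderiv ℝ (fun y => fderiv ℝ G y u) q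
      = (fderiv ℝ (fderiv ℝ G) q).flip u := by
    intro u
    have := fderiv_clm_apply (c := fderiv ℝ G) (u := fun _ => u) (hdG q)
      (differentiableAt_const u)
    simpa using this
  rw [expand v, expand w]
  simpa using hsymm w v
end lines

theorem pd_swap {G : E2 → ℝ} (hG : ContDiff ℝ (⊤ : ℕ∞) G) (v w : E2) (q : E2) :
    pd v (pd w G) q = pd w (pd v G) q := fderiv_swap hG q w v

variable {f g : E2 → ℝ} {v q : E2}
theorem pd_add (hf : DifferentiableAt ℝ f q) (hg : DifferentiableAt ℝ g q) :
    pd v (fun y => f y + g y) q = pd v f q + pd v g q := by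
  simp [pd, fderiv_fun_add hf hg]
theorem pd_sub (hf : DifferentiableAt ℝ f q) (hg : DifferentiableAt ℝ g q) :
    pd v (fun y => f y - g y) q = pd v f q - pd v g q := by
  simp [pd, fderiv_fun_sub hf hg]
theorem pd_mul (hf : DifferentiableAt ℝ f q) (hg : DifferentiableAt ℝ g q) :
    pd v (fun y => f y * g y) q = pd v f q * g q + f q * pd v g q := by
  simp [pd, fderiv_fun_mul hf hg, mul_comm]
  ring
theorem pd_const (c : ℝ) : pd v (fun _ => c) q = (0:ℝ) := by simp [pd]
theorem pd_const_mul (c : ℝ) (hf : DifferentiableAt ℝ f q) :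
    pd v (fun y => c * f y) q = c * pd v f q := by
  simp [pd, fderiv_const_mul hf]
theorem pd_neg (hf : DifferentiableAt ℝ f q) :
    pd v (fun y => -(f y)) q = -(pd v f q) := by
  simp [pd, fderiv_neg]
theorem pd_mul_const (c : ℝ) (hf : DifferentiableAt ℝ f q) :
    pd v (fun y => f y * c) q = pd v f q * c := by
  simp [pd, fderiv_mul_const hf]; ring
theorem pd_x1 : pd v (fun y : E2 => y.2.1) q = v.2.1 := by
  have h : HasFDerivAt (fun y : E2 => y.2.1)
      ((ContinuousLinearMap.fst ℝ ℝ ℝ).comp (ContinuousLinearMap.snd ℝ ℝ (ℝ × ℝ))) q :=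
    ((ContinuousLinearMap.fst ℝ ℝ ℝ).comp (ContinuousLinearMap.snd ℝ ℝ (ℝ × ℝ))).hasFDerivAt
  simp [pd, h.fderiv]
theorem pd_x2 : pd v (fun y : E2 => y.2.2) q = v.2.2 := by
  have h : HasFDerivAt (fun y : E2 => y.2.2)
      ((ContinuousLinearMap.snd ℝ ℝ ℝ).comp (ContinuousLinearMap.snd ℝ ℝ (ℝ × ℝ))) q :=
    ((ContinuousLinearMap.snd ℝ ℝ ℝ).comp (ContinuousLinearMap.snd ℝ ℝ (ℝ × ℝ))).hasFDerivAt
  simp [pd, h.fderiv]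

-- coordinate function smoothness
theorem contDiff_coordX : ContDiff ℝ (⊤ : ℕ∞) (fun y : E2 => y.2.1) := contDiff_fst.comp contDiff_snd
theorem contDiff_coordZ : ContDiff ℝ (⊤ : ℕ∞) (fun y : E2 => y.2.2) := contDiff_snd.comp contDiff_snd

/-! Fields -/

def Jn (h : ℝ → ℝ × ℝ → ℝ) : E2 → ℝ := fun q => h q.1 q.2
def U1J (uS : ℝ → ℝ × ℝ → ℝ × ℝ) : E2 → ℝ := fun q => (uS q.1 q.2).1
def U2J (uS : ℝ → ℝ × ℝ → ℝ × ℝ) : E2 → ℝ := fun q => (uS q.1 q.2).2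

def VJ1 (uS : ℝ → ℝ × ℝ → ℝ × ℝ) (uT θS : ℝ → ℝ × ℝ → ℝ) (f s : ℝ) : E2 → ℝ :=
  fun y => s * U1J uS y
    - (Jn uT y + f * y.2.1) * pd eX (Jn θS) y

def VJ2 (uS : ℝ → ℝ × ℝ → ℝ × ℝ) (uT θS : ℝ → ℝ × ℝ → ℝ) (f s : ℝ) : E2 → ℝ :=
  fun y => s * U2J uS y
    - (Jn uT y + f * y.2.1) * pd eZ (Jn θS) y

def PHIJ (uS : ℝ → ℝ × ℝ → ℝ × ℝ) (uT θS Pi : ℝ → ℝ × ℝ → ℝ) (f g s cp : ℝ) : E2 → ℝ :=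
  fun y => s * (-(cp * (Jn θS y * Jn Pi y)) - g * y.2.2
    + Jn uT y * Jn uT y * (1/2) + f * (y.2.1 * Jn uT y)
    + (U1J uS y * U1J uS y
       + U2J uS y * U2J uS y) * (1/2))

section fields
variable {uS : ℝ → ℝ × ℝ → ℝ × ℝ} {uT θS Pi : ℝ → ℝ × ℝ → ℝ} {f g s cp : ℝ}

theorem smooth_VJ1 (hUS : ContDiff ℝ (⊤ : ℕ∞) (fun q : E2 => uS q.1 q.2))
    (hUT : ContDiff ℝ (⊤ : ℕ∞) (Jn uT)) (hTH : ContDiff ℝ (⊤ : ℕ∞) (Jn θS)) :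
    ContDiff ℝ (⊤ : ℕ∞) (VJ1 uS uT θS f s) :=
  (contDiff_const.mul hUS.fst).sub
    ((hUT.add (contDiff_const.mul contDiff_coordX)).mul (smooth_pdv hTH eX))

theorem smooth_VJ2 (hUS : ContDiff ℝ (⊤ : ℕ∞) (fun q : E2 => uS q.1 q.2))
    (hUT : ContDiff ℝ (⊤ : ℕ∞) (Jn uT)) (hTH : ContDiff ℝ (⊤ : ℕ∞) (Jn θS)) :
    ContDiff ℝ (⊤ : ℕ∞) (VJ2 uS uT θS f s) :=
  (contDiff_const.mul hUS.snd).sub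
    ((hUT.add (contDiff_const.mul contDiff_coordX)).mul (smooth_pdv hTH eZ))

theorem smooth_PHIJ (hUS : ContDiff ℝ (⊤ : ℕ∞) (fun q : E2 => uS q.1 q.2))
    (hUT : ContDiff ℝ (⊤ : ℕ∞) (Jn uT)) (hTH : ContDiff ℝ (⊤ : ℕ∞) (Jn θS))
    (hPI : ContDiff ℝ (⊤ : ℕ∞) (Jn Pi)) :
    ContDiff ℝ (⊤ : ℕ∞) (PHIJ uS uT θS Pi f g s cp) :=
  contDiff_const.mul
    (((((contDiff_const.mul (hTH.mul hPI)).neg.sub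
        (contDiff_const.mul contDiff_coordZ)).add
        ((hUT.mul hUT).mul contDiff_const)).add
        (contDiff_const.mul (contDiff_coordX.mul hUT))).add
        (((hUS.fst.mul hUS.fst).add (hUS.snd.mul hUS.snd)).mul contDiff_const))
end fields


section key
variable {uS : ℝ → ℝ × ℝ → ℝ × ℝ} {uT θS Pi : ℝ → ℝ × ℝ → ℝ} {f g s cp : ℝ}

theorem keys
    (hUS : ContDiff ℝ (⊤ : ℕ∞) (fun q : E2 => uS q.1 q.2))
    (hUT : ContDiff ℝ (⊤ : ℕ∞) (Jn uT)) (hTH : ContDiff ℝ (⊤ : ℕ∞) (Jn θS))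
    (hPI : ContDiff ℝ (⊤ : ℕ∞) (Jn Pi))
    (h1x : ∀ q : E2, pd eT (U1J uS) q
        + (U1J uS q * pd eX (U1J uS) q + U2J uS q * pd eZ (U1J uS) q)
        - f * Jn uT q = -(cp * Jn θS q * pd eX (Jn Pi) q))
    (h1z : ∀ q : E2, pd eT (U2J uS) q
        + (U1J uS q * pd eX (U2J uS) q + U2J uS q * pd eZ (U2J uS) q)
        = -(cp * Jn θS q * pd eZ (Jn Pi) q) - g)
    (h2 : ∀ q : E2, pd eT (Jn uT) q
        + (U1J uS q * pd eX (Jn uT) q + U2J uS q * pd eZ (Jn uT) q)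
        + f * U1J uS q = s * cp * Jn Pi q)
    (h3 : ∀ q : E2, pd eT (Jn θS) q
        + (U1J uS q * pd eX (Jn θS) q + U2J uS q * pd eZ (Jn θS) q)
        = -(s * Jn uT q)) :
    ∀ q : E2,
      (pd eT (VJ1 uS uT θS f s) q
        + (U1J uS q * pd eX (VJ1 uS uT θS f s) q + U2J uS q * pd eZ (VJ1 uS uT θS f s) q)
        + (VJ1 uS uT θS f s q * pd eX (U1J uS) q + VJ2 uS uT θS f s q * pd eX (U2J uS) q)
        = pd eX (PHIJ uS uT θS Pi f g s cp) q)
      ∧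
      (pd eT (VJ2 uS uT θS f s) q
        + (U1J uS q * pd eX (VJ2 uS uT θS f s) q + U2J uS q * pd eZ (VJ2 uS uT θS f s) q)
        + (VJ1 uS uT θS f s q * pd eZ (U1J uS) q + VJ2 uS uT θS f s q * pd eZ (U2J uS) q)
        = pd eZ (PHIJ uS uT θS Pi f g s cp) q) := by
  have hU1 : ContDiff ℝ (⊤ : ℕ∞) (U1J uS) := hUS.fst
  have hU2 : ContDiff ℝ (⊤ : ℕ∞) (U2J uS) := hUS.snd
  have dd : ∀ {G : E2 → ℝ}, ContDiff ℝ (⊤ : ℕ∞) G → ∀ y : E2, DifferentiableAt ℝ G y :=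
    fun h y => h.differentiable (by simp) y
  have hQ : ContDiff ℝ (⊤ : ℕ∞) (fun y : E2 => Jn uT y + f * y.2.1) :=
    hUT.add (contDiff_const.mul contDiff_coordX)
  have hTHx : ContDiff ℝ (⊤ : ℕ∞) (pd eX (Jn θS)) := smooth_pdv hTH eX
  have hTHz : ContDiff ℝ (⊤ : ℕ∞) (pd eZ (Jn θS)) := smooth_pdv hTH eZ
  have hTHt : ContDiff ℝ (⊤ : ℕ∞) (pd eT (Jn θS)) := smooth_pdv hTH eT
  -- expansion of VJ1/VJ2 derivatives
  have expV : ∀ (e : E2), ContDiff ℝ (⊤ : ℕ∞) (pd e (Jn θS)) →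
      ∀ (U : E2 → ℝ), ContDiff ℝ (⊤ : ℕ∞) U → ∀ (w y : E2),
      pd w (fun z => s * U z - (Jn uT z + f * z.2.1) * pd e (Jn θS) z) y
        = s * pd w U y - ((pd w (Jn uT) y + f * w.2.1) * pd e (Jn θS) y
            + (Jn uT y + f * y.2.1) * pd w (pd e (Jn θS)) y) := by
    intro e hTHe U hU w y
    rw [pd_sub (by exact dd (contDiff_const.mul hU) y) (by exact dd (hQ.mul hTHe) y),
      pd_const_mul _ (dd hU y),
      pd_mul (dd hQ y) (dd hTHe y),
      pd_add (dd hUT y) (dd (contDiff_const.mul contDiff_coordX) y),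
      pd_const_mul _ (dd contDiff_coordX y), pd_x1]
  -- expansion of PHIJ derivative
  have expPH : ∀ (w y : E2),
      pd w (PHIJ uS uT θS Pi f g s cp) y
        = s * (-(cp * (pd w (Jn θS) y * Jn Pi y + Jn θS y * pd w (Jn Pi) y))
            - g * w.2.2
            + (pd w (Jn uT) y * Jn uT y + Jn uT y * pd w (Jn uT) y) * (1/2)
            + f * (w.2.1 * Jn uT y + y.2.1 * pd w (Jn uT) y)
            + ((pd w (U1J uS) y * U1J uS y + U1J uS y * pd w (U1J uS) y)
               + (pd w (U2J uS) y * U2J uS y + U2J uS y * pd w (U2J uS) y)) * (1/2)) := by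
    intro w y
    unfold PHIJ
    rw [pd_const_mul _ (by exact dd (((((contDiff_const.mul (hTH.mul hPI)).neg.sub
          (contDiff_const.mul contDiff_coordZ)).add
          ((hUT.mul hUT).mul contDiff_const)).add
          (contDiff_const.mul (contDiff_coordX.mul hUT))).add
          (((hU1.mul hU1).add (hU2.mul hU2)).mul contDiff_const)) y),
      pd_add (by exact dd ((((contDiff_const.mul (hTH.mul hPI)).neg.sub
          (contDiff_const.mul contDiff_coordZ)).add
          ((hUT.mul hUT).mul contDiff_const)).add
          (contDiff_const.mul (contDiff_coordX.mul hUT))) y)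
        (by exact dd (((hU1.mul hU1).add (hU2.mul hU2)).mul contDiff_const) y),
      pd_add (by exact dd (((contDiff_const.mul (hTH.mul hPI)).neg.sub
          (contDiff_const.mul contDiff_coordZ)).add
          ((hUT.mul hUT).mul contDiff_const)) y)
        (by exact dd (contDiff_const.mul (contDiff_coordX.mul hUT)) y),
      pd_add (by exact dd ((contDiff_const.mul (hTH.mul hPI)).neg.sub
          (contDiff_const.mul contDiff_coordZ)) y)
        (by exact dd ((hUT.mul hUT).mul contDiff_const) y),
      pd_sub (by exact dd (contDiff_const.mul (hTH.mul hPI)).neg y)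
        (by exact dd (contDiff_const.mul contDiff_coordZ) y),
      pd_neg (by exact dd (contDiff_const.mul (hTH.mul hPI)) y),
      pd_const_mul _ (by exact dd (hTH.mul hPI) y),
      pd_mul (dd hTH y) (dd hPI y),
      pd_const_mul _ (dd contDiff_coordZ y), pd_x2,
      pd_mul_const _ (by exact dd (hUT.mul hUT) y),
      pd_mul (dd hUT y) (dd hUT y),
      pd_const_mul _ (by exact dd (contDiff_coordX.mul hUT) y),
      pd_mul (dd contDiff_coordX y) (dd hUT y), pd_x1,
      pd_mul_const _ (by exact dd ((hU1.mul hU1).add (hU2.mul hU2)) y),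
      pd_add (by exact dd (hU1.mul hU1) y) (by exact dd (hU2.mul hU2) y),
      pd_mul (dd hU1 y) (dd hU1 y),
      pd_mul (dd hU2 y) (dd hU2 y)]
  -- differentiated form of h3
  have hA3 : (fun y : E2 => pd eT (Jn θS) y
      + (U1J uS y * pd eX (Jn θS) y + U2J uS y * pd eZ (Jn θS) y))
      = (fun y : E2 => -(s * Jn uT y)) := funext h3
  have exp3 : ∀ (w y : E2),
      pd w (pd eT (Jn θS)) y
      + ((pd w (U1J uS) y * pd eX (Jn θS) y + U1J uS y * pd w (pd eX (Jn θS)) y)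
        + (pd w (U2J uS) y * pd eZ (Jn θS) y + U2J uS y * pd w (pd eZ (Jn θS)) y))
      = -(s * pd w (Jn uT) y) := by
    intro w y
    have hcongr := congrArg (fun G : E2 → ℝ => pd w G y) hA3
    rw [pd_add (by exact dd hTHt y) (by exact dd ((hU1.mul hTHx).add (hU2.mul hTHz)) y),
      pd_add (by exact dd (hU1.mul hTHx) y) (by exact dd (hU2.mul hTHz) y),
      pd_mul (dd hU1 y) (dd hTHx y), pd_mul (dd hU2 y) (dd hTHz y),
      pd_neg (by exact dd (contDiff_const.mul hUT) y),
      pd_const_mul _ (dd hUT y)] at hcongr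
    exact hcongr
  intro q
  constructor
  · have E1 : pd eT (VJ1 uS uT θS f s) q = _ := expV eX hTHx (U1J uS) hU1 eT q
    have E2 : pd eX (VJ1 uS uT θS f s) q = _ := expV eX hTHx (U1J uS) hU1 eX q
    have E3 : pd eZ (VJ1 uS uT θS f s) q = _ := expV eX hTHx (U1J uS) hU1 eZ q
    have h3X := exp3 eX q
    rw [pd_swap hTH eX eT q, pd_swap hTH eX eZ q] at h3X
    rw [E1, E2, E3, expPH eX q]
    simp only [VJ1, VJ2, show eT.2.1 = 0 from rfl, show eX.2.1 = 1 from rfl,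
      show eZ.2.1 = 0 from rfl, show eT.2.2 = 0 from rfl, show eX.2.2 = 0 from rfl,
      show eZ.2.2 = 1 from rfl]
    linear_combination s * h1x q - pd eX (Jn θS) q * h2 q - (Jn uT q + f * q.2.1) * h3X
  · have E1 : pd eT (VJ2 uS uT θS f s) q = _ := expV eZ hTHz (U2J uS) hU2 eT q
    have E2 : pd eX (VJ2 uS uT θS f s) q = _ := expV eZ hTHz (U2J uS) hU2 eX q
    have E3 : pd eZ (VJ2 uS uT θS f s) q = _ := expV eZ hTHz (U2J uS) hU2 eZ q
    have h3Z := exp3 eZ q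
    rw [pd_swap hTH eZ eT q, pd_swap hTH eZ eX q] at h3Z
    rw [E1, E2, E3, expPH eZ q]
    simp only [VJ1, VJ2, show eT.2.1 = 0 from rfl, show eX.2.1 = 1 from rfl,
      show eZ.2.1 = 0 from rfl, show eT.2.2 = 0 from rfl, show eX.2.2 = 0 from rfl,
      show eZ.2.2 = 1 from rfl]
    linear_combination s * h1z q - pd eZ (Jn θS) q * h2 q - (Jn uT q + f * q.2.1) * h3Z
end key
/-! Bridging lemmas to the `px/pz/pt` formulation. -/
section bridge
variable {F : Type*} [NormedAddCommGroup F] [NormedSpace ℝ F]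

theorem lineT' (t : ℝ) (p : ℝ × ℝ) :
    HasDerivAt (fun τ : ℝ => ((τ, p) : E2)) eT t :=
  (hasDerivAt_id t).prodMk (hasDerivAt_const t p)
theorem lineX' (t : ℝ) (p : ℝ × ℝ) :
    HasDerivAt (fun x : ℝ => ((t, (x, p.2)) : E2)) eX p.1 :=
  (hasDerivAt_const p.1 t).prodMk ((hasDerivAt_id p.1).prodMk (hasDerivAt_const p.1 p.2))
theorem lineZ' (t : ℝ) (p : ℝ × ℝ) :
    HasDerivAt (fun z : ℝ => ((t, (p.1, z)) : E2)) eZ p.2 :=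
  (hasDerivAt_const p.2 t).prodMk ((hasDerivAt_const p.2 p.1).prodMk (hasDerivAt_id p.2))

theorem hdT {G : E2 → F} (hG : ContDiff ℝ (⊤ : ℕ∞) G) (t : ℝ) (p : ℝ × ℝ) :
    HasDerivAt (fun τ : ℝ => G (τ, p)) (fderiv ℝ G (t, p) eT) t :=
  hd_comp hG (lineT' t p)
theorem hdX {G : E2 → F} (hG : ContDiff ℝ (⊤ : ℕ∞) G) (t : ℝ) (p : ℝ × ℝ) :
    HasDerivAt (fun x : ℝ => G (t, (x, p.2))) (fderiv ℝ G (t, p) eX) p.1 := by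
  simpa using hd_comp hG (lineX' t p)
theorem hdZ {G : E2 → F} (hG : ContDiff ℝ (⊤ : ℕ∞) G) (t : ℝ) (p : ℝ × ℝ) :
    HasDerivAt (fun z : ℝ => G (t, (p.1, z))) (fderiv ℝ G (t, p) eZ) p.2 := by
  simpa using hd_comp hG (lineZ' t p)

-- lines in the plane ℝ × ℝ
theorem hdA {G : ℝ × ℝ → F} (hG : ContDiff ℝ (⊤ : ℕ∞) G) (a b : ℝ) :
    HasDerivAt (fun x : ℝ => G (x, b)) (fderiv ℝ G (a, b) (1, 0)) a :=
  hd_comp hG ((hasDerivAt_id a).prodMk (hasDerivAt_const a b))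
theorem hdB {G : ℝ × ℝ → F} (hG : ContDiff ℝ (⊤ : ℕ∞) G) (a b : ℝ) :
    HasDerivAt (fun y : ℝ => G (a, y)) (fderiv ℝ G (a, b) (0, 1)) b :=
  hd_comp hG ((hasDerivAt_const b a).prodMk (hasDerivAt_id b))
end bridge

theorem pt_eq {h : ℝ → ℝ × ℝ → ℝ} (hG : ContDiff ℝ (⊤ : ℕ∞) (Jn h)) (t : ℝ) (p : ℝ × ℝ) :
    pt h t p = pd eT (Jn h) (t, p) := (hdT hG t p).deriv
theorem px_eq {h : ℝ → ℝ × ℝ → ℝ} (hG : ContDiff ℝ (⊤ : ℕ∞) (Jn h)) (t : ℝ) (p : ℝ × ℝ) :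
    px (h t) p = pd eX (Jn h) (t, p) := (hdX hG t p).deriv
theorem pz_eq {h : ℝ → ℝ × ℝ → ℝ} (hG : ContDiff ℝ (⊤ : ℕ∞) (Jn h)) (t : ℝ) (p : ℝ × ℝ) :
    pz (h t) p = pd eZ (Jn h) (t, p) := (hdZ hG t p).deriv

theorem clm_decomp (L : E2 →L[ℝ] ℝ) (a : ℝ) (b : ℝ × ℝ) :
    L (a, b) = a * L eT + b.1 * L eX + b.2 * L eZ := by
  have hab : ((a, b) : E2) = a • eT + (b.1 • eX + b.2 • eZ) := by
    simp [eT, eX, eZ, Prod.ext_iff]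
  rw [hab, map_add, map_add, map_smul, map_smul, map_smul]
  simp [smul_eq_mul]; ring

def CJ (c : ℝ → ℝ → ℝ × ℝ) : ℝ × ℝ → ℝ × ℝ := fun q => c q.1 q.2

end SCMK

open SCMK

/-- Kelvin circulation conservation for the Sliced Compressible
Model: under (C1)–(C4), with Exner function Π = (DRθ_S/p₀)^{R/c_v}, R = c_p − c_v,
the circulation ∮ (s u_S − (u_T + f x)∇θ_S)·dx around any loop advected by u_S is
constant in time. -/
theorem scm_kelvin_circulation
    (uS : ℝ → ℝ × ℝ → ℝ × ℝ) (uT θS D Pi : ℝ → ℝ × ℝ → ℝ)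
    (f g s cp cv p₀ : ℝ) (hcv : 0 < cv) (hcpcv : cv < cp) (hp₀ : 0 < p₀)
    (huS : SmoothV uS) (huT : SmoothS uT) (hθS : SmoothS θS) (hD : SmoothS D)
    (hDpos : ∀ t p, 0 < D t p) (hθpos : ∀ t p, 0 < θS t p)
    (hPi : ∀ t p, Pi t p = (D t p * (cp - cv) * θS t p / p₀) ^ ((cp - cv) / cv))
    (hC1x : ∀ t p, pt (c1 uS) t p + adv uS (c1 uS) t p - f * uT t p
        = -(cp * θS t p * px (Pi t) p))
    (hC1z : ∀ t p, pt (c2 uS) t p + adv uS (c2 uS) t p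
        = -(cp * θS t p * pz (Pi t) p) - g)
    (hC2 : ∀ t p, pt uT t p + adv uS uT t p + f * (uS t p).1 = s * cp * Pi t p)
    (hC3 : ∀ t p, pt θS t p + adv uS θS t p = -(s * uT t p))
    (hC4 : ∀ t p, pt D t p + px (fun q => D t q * (uS t q).1) p
        + pz (fun q => D t q * (uS t q).2) p = 0)
    (c : ℝ → ℝ → ℝ × ℝ) (hc : AdvectedLoop uS c) :
    ∀ t₁ t₂ : ℝ,
      (∫ σ in (0:ℝ)..1,
        dot (s * (uS t₁ (c t₁ σ)).1
               - (uT t₁ (c t₁ σ) + f * (c t₁ σ).1) * px (θS t₁) (c t₁ σ),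
             s * (uS t₁ (c t₁ σ)).2
               - (uT t₁ (c t₁ σ) + f * (c t₁ σ).1) * pz (θS t₁) (c t₁ σ))
            (deriv (c t₁) σ))
      =
      (∫ σ in (0:ℝ)..1,
        dot (s * (uS t₂ (c t₂ σ)).1
               - (uT t₂ (c t₂ σ) + f * (c t₂ σ).1) * px (θS t₂) (c t₂ σ),
             s * (uS t₂ (c t₂ σ)).2
               - (uT t₂ (c t₂ σ) + f * (c t₂ σ).1) * pz (θS t₂) (c t₂ σ))
            (deriv (c t₂) σ)) := by
  intro t₁ t₂
  have hUS : ContDiff ℝ (⊤ : ℕ∞) (fun q : E2 => uS q.1 q.2) := huS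
  have hUT : ContDiff ℝ (⊤ : ℕ∞) (Jn uT) := huT
  have hTH : ContDiff ℝ (⊤ : ℕ∞) (Jn θS) := hθS
  have hDD : ContDiff ℝ (⊤ : ℕ∞) (Jn D) := hD
  have hCC : ContDiff ℝ (⊤ : ℕ∞) (CJ c) := hc.1
  have hclose : ∀ t, c t 0 = c t 1 := hc.2.1
  have hadv : ∀ t σ, HasDerivAt (fun τ => c τ σ) (uS t (c t σ)) t := hc.2.2
  have hU1 : ContDiff ℝ (⊤ : ℕ∞) (Jn (c1 uS)) := hUS.fst
  have hU2 : ContDiff ℝ (⊤ : ℕ∞) (Jn (c2 uS)) := hUS.snd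
  -- smoothness of the Exner function
  have hPI : ContDiff ℝ (⊤ : ℕ∞) (Jn Pi) := by
    have h1 : Jn Pi = fun q : E2 =>
        (Jn D q * (cp - cv) * Jn θS q / p₀) ^ ((cp - cv) / cv) := by
      funext q; exact hPi q.1 q.2
    rw [h1, contDiff_iff_contDiffAt]
    intro q
    refine ContDiffAt.rpow_const_of_ne
      ((((hDD.mul contDiff_const).mul hTH).div_const p₀).contDiffAt) (ne_of_gt ?_)
    have h2 := hDpos q.1 q.2
    have h3 := hθpos q.1 q.2
    have hR : 0 < cp - cv := by linarith
    have h4 : (0:ℝ) < Jn D q := h2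
    have h5 : (0:ℝ) < Jn θS q := h3
    positivity
  -- convert the PDE hypotheses to `pd` form
  have h1x' : ∀ q : E2, pd eT (U1J uS) q
      + (U1J uS q * pd eX (U1J uS) q + U2J uS q * pd eZ (U1J uS) q)
      - f * Jn uT q = -(cp * Jn θS q * pd eX (Jn Pi) q) := by
    rintro ⟨t, p⟩
    have h := hC1x t p
    have e1 : pt (c1 uS) t p = pd eT (U1J uS) (t, p) := pt_eq hU1 t p
    have e2 : adv uS (c1 uS) t p = U1J uS (t,p) * pd eX (U1J uS) (t,p)
        + U2J uS (t,p) * pd eZ (U1J uS) (t,p) := by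
      unfold adv
      rw [px_eq hU1 t p, pz_eq hU1 t p]
      rfl
    have e3 : px (Pi t) p = pd eX (Jn Pi) (t, p) := px_eq hPI t p
    rw [e1, e2, e3] at h
    exact h
  have h1z' : ∀ q : E2, pd eT (U2J uS) q
      + (U1J uS q * pd eX (U2J uS) q + U2J uS q * pd eZ (U2J uS) q)
      = -(cp * Jn θS q * pd eZ (Jn Pi) q) - g := by
    rintro ⟨t, p⟩
    have h := hC1z t p
    have e1 : pt (c2 uS) t p = pd eT (U2J uS) (t, p) := pt_eq hU2 t p
    have e2 : adv uS (c2 uS) t p = U1J uS (t,p) * pd eX (U2J uS) (t,p)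
        + U2J uS (t,p) * pd eZ (U2J uS) (t,p) := by
      unfold adv
      rw [px_eq hU2 t p, pz_eq hU2 t p]
      rfl
    have e3 : pz (Pi t) p = pd eZ (Jn Pi) (t, p) := pz_eq hPI t p
    rw [e1, e2, e3] at h
    exact h
  have h2' : ∀ q : E2, pd eT (Jn uT) q
      + (U1J uS q * pd eX (Jn uT) q + U2J uS q * pd eZ (Jn uT) q)
      + f * U1J uS q = s * cp * Jn Pi q := by
    rintro ⟨t, p⟩
    have h := hC2 t p
    have e1 : pt uT t p = pd eT (Jn uT) (t, p) := pt_eq hUT t p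
    have e2 : adv uS uT t p = U1J uS (t,p) * pd eX (Jn uT) (t,p)
        + U2J uS (t,p) * pd eZ (Jn uT) (t,p) := by
      unfold adv
      rw [px_eq hUT t p, pz_eq hUT t p]
      rfl
    rw [e1, e2] at h
    exact h
  have h3' : ∀ q : E2, pd eT (Jn θS) q
      + (U1J uS q * pd eX (Jn θS) q + U2J uS q * pd eZ (Jn θS) q)
      = -(s * Jn uT q) := by
    rintro ⟨t, p⟩
    have h := hC3 t p
    have e1 : pt θS t p = pd eT (Jn θS) (t, p) := pt_eq hTH t p
    have e2 : adv uS θS t p = U1J uS (t,p) * pd eX (Jn θS) (t,p)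
        + U2J uS (t,p) * pd eZ (Jn θS) (t,p) := by
      unfold adv
      rw [px_eq hTH t p, pz_eq hTH t p]
      rfl
    rw [e1, e2] at h
    exact h
  have hkeys := keys hUS hUT hTH hPI h1x' h1z' h2' h3'
  have hV1s : ContDiff ℝ (⊤ : ℕ∞) (VJ1 uS uT θS f s) := smooth_VJ1 hUS hUT hTH
  have hV2s : ContDiff ℝ (⊤ : ℕ∞) (VJ2 uS uT θS f s) := smooth_VJ2 hUS hUT hTH
  have hPHs : ContDiff ℝ (⊤ : ℕ∞) (PHIJ uS uT θS Pi f g s cp) := smooth_PHIJ hUS hUT hTH hPI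
  set K : ℝ → ℝ → ℝ := fun t σ =>
    VJ1 uS uT θS f s (t, c t σ) * (fderiv ℝ (CJ c) (t, σ) (0, 1)).1
      + VJ2 uS uT θS f s (t, c t σ) * (fderiv ℝ (CJ c) (t, σ) (0, 1)).2 with hKdef
  set G : ℝ → ℝ → ℝ := fun t σ =>
    pd eX (PHIJ uS uT θS Pi f g s cp) (t, c t σ) * (fderiv ℝ (CJ c) (t, σ) (0, 1)).1
      + pd eZ (PHIJ uS uT θS Pi f g s cp) (t, c t σ) * (fderiv ℝ (CJ c) (t, σ) (0, 1)).2
    with hGdef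
  -- continuity
  have hcurve : Continuous (fun q : ℝ × ℝ => ((q.1, CJ c q) : E2)) :=
    continuous_fst.prodMk hCC.continuous
  have hfdC : Continuous (fun q : ℝ × ℝ => fderiv ℝ (CJ c) q ((0:ℝ), (1:ℝ))) :=
    (smooth_pdv hCC (0, 1)).continuous
  have hKc : Continuous (fun q : ℝ × ℝ => K q.1 q.2) := by
    simp only [hKdef]
    exact ((hV1s.continuous.comp hcurve).mul hfdC.fst).add
      ((hV2s.continuous.comp hcurve).mul hfdC.snd)
  have hGc : Continuous (fun q : ℝ × ℝ => G q.1 q.2) := by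
    simp only [hGdef]
    exact (((smooth_pdv hPHs eX).continuous.comp hcurve).mul hfdC.fst).add
      (((smooth_pdv hPHs eZ).continuous.comp hcurve).mul hfdC.snd)
  -- derivative of the potential along the loop in σ
  have hPsig : ∀ t σ, HasDerivAt (fun y => PHIJ uS uT θS Pi f g s cp (t, c t y)) (G t σ) σ := by
    intro t σ
    have hcv2 : HasDerivAt (fun y : ℝ => ((t, c t y) : E2))
        ((0:ℝ), fderiv ℝ (CJ c) (t, σ) (0, 1)) σ :=
      (hasDerivAt_const σ t).prodMk (hdB hCC t σ)
    have h0 := (hPHs.differentiable (by simp) ((t, c t σ) : E2)).hasFDerivAt.comp_hasDerivAt σ hcv2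
    have h1 : fderiv ℝ (PHIJ uS uT θS Pi f g s cp) (t, c t σ)
        ((0:ℝ), fderiv ℝ (CJ c) (t, σ) (0, 1)) = G t σ := by
      rw [clm_decomp]
      simp only [hGdef, pd]
      ring
    rw [h1] at h0
    exact h0
  -- the time derivative of the circulation integrand
  have hKt : ∀ t σ, HasDerivAt (fun τ => K τ σ) (G t σ) t := by
    intro t σ
    have hcv1 : HasDerivAt (fun τ : ℝ => ((τ, c τ σ) : E2)) (1, uS t (c t σ)) t :=
      (hasDerivAt_id t).prodMk (hadv t σ)
    have hV1t : HasDerivAt (fun τ => VJ1 uS uT θS f s (τ, c τ σ))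
        (fderiv ℝ (VJ1 uS uT θS f s) (t, c t σ) (1, uS t (c t σ))) t :=
      (hV1s.differentiable (by simp) _).hasFDerivAt.comp_hasDerivAt t hcv1
    have hV2t : HasDerivAt (fun τ => VJ2 uS uT θS f s (τ, c τ σ))
        (fderiv ℝ (VJ2 uS uT θS f s) (t, c t σ) (1, uS t (c t σ))) t :=
      (hV2s.differentiable (by simp) _).hasFDerivAt.comp_hasDerivAt t hcv1
    have hpd01 : ContDiff ℝ (⊤ : ℕ∞) (fun q : ℝ × ℝ => fderiv ℝ (CJ c) q ((0:ℝ),(1:ℝ))) :=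
      smooth_pdv hCC (0, 1)
    have hfdt : HasDerivAt (fun τ => fderiv ℝ (CJ c) (τ, σ) ((0:ℝ),(1:ℝ)))
        (fderiv ℝ (fun q : ℝ × ℝ => fderiv ℝ (CJ c) q ((0:ℝ),(1:ℝ))) (t, σ) (1, 0)) t :=
      hdA hpd01 t σ
    have hW : ContDiff ℝ (⊤ : ℕ∞) (fun q : ℝ × ℝ => uS q.1 (c q.1 q.2)) :=
      hUS.comp (contDiff_fst.prodMk hCC)
    have hswap : fderiv ℝ (fun q : ℝ × ℝ => fderiv ℝ (CJ c) q ((0:ℝ),(1:ℝ))) (t, σ) (1, 0)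
        = fderiv ℝ (fun q : ℝ × ℝ => uS q.1 (c q.1 q.2)) (t, σ) ((0:ℝ),(1:ℝ)) := by
      have hfun : (fun q : ℝ × ℝ => fderiv ℝ (CJ c) q ((1:ℝ),(0:ℝ)))
          = fun q : ℝ × ℝ => uS q.1 (c q.1 q.2) :=
        funext fun q => HasDerivAt.unique (hdA hCC q.1 q.2) (hadv q.1 q.2)
      rw [fderiv_swap hCC (t, σ) ((0:ℝ),(1:ℝ)) (1, 0), hfun]
    have hMval : fderiv ℝ (fun q : ℝ × ℝ => uS q.1 (c q.1 q.2)) (t, σ) ((0:ℝ),(1:ℝ))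
        = fderiv ℝ (fun q : E2 => uS q.1 q.2) (t, c t σ)
            ((0:ℝ), fderiv ℝ (CJ c) (t, σ) (0, 1)) := by
      have ha := hdB hW t σ
      have hb := (hUS.differentiable (by simp) ((t, c t σ) : E2)).hasFDerivAt.comp_hasDerivAt σ
        ((hasDerivAt_const σ t).prodMk (hdB hCC t σ))
      exact HasDerivAt.unique ha hb
    rw [hswap, hMval] at hfdt
    have hfdt1 : HasDerivAt (fun τ => (fderiv ℝ (CJ c) (τ, σ) ((0:ℝ),(1:ℝ))).1)
        (fderiv ℝ (fun q : E2 => uS q.1 q.2) (t, c t σ)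
          ((0:ℝ), fderiv ℝ (CJ c) (t, σ) (0, 1))).1 t :=
      (ContinuousLinearMap.fst ℝ ℝ ℝ).hasFDerivAt.comp_hasDerivAt t hfdt
    have hfdt2 : HasDerivAt (fun τ => (fderiv ℝ (CJ c) (τ, σ) ((0:ℝ),(1:ℝ))).2)
        (fderiv ℝ (fun q : E2 => uS q.1 q.2) (t, c t σ)
          ((0:ℝ), fderiv ℝ (CJ c) (t, σ) (0, 1))).2 t :=
      (ContinuousLinearMap.snd ℝ ℝ ℝ).hasFDerivAt.comp_hasDerivAt t hfdt
    have hM1 : (fderiv ℝ (fun q : E2 => uS q.1 q.2) (t, c t σ)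
          ((0:ℝ), fderiv ℝ (CJ c) (t, σ) (0, 1))).1
        = fderiv ℝ (U1J uS) (t, c t σ) ((0:ℝ), fderiv ℝ (CJ c) (t, σ) (0, 1)) := by
      have h := ((hUS.differentiable (by simp) ((t, c t σ) : E2)).hasFDerivAt).fst
      have h2 : fderiv ℝ (U1J uS) (t, c t σ)
          = (ContinuousLinearMap.fst ℝ ℝ ℝ).comp
            (fderiv ℝ (fun q : E2 => uS q.1 q.2) (t, c t σ)) := h.fderiv
      rw [h2]
      rfl
    have hM2 : (fderiv ℝ (fun q : E2 => uS q.1 q.2) (t, c t σ)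
          ((0:ℝ), fderiv ℝ (CJ c) (t, σ) (0, 1))).2
        = fderiv ℝ (U2J uS) (t, c t σ) ((0:ℝ), fderiv ℝ (CJ c) (t, σ) (0, 1)) := by
      have h := ((hUS.differentiable (by simp) ((t, c t σ) : E2)).hasFDerivAt).snd
      have h2 : fderiv ℝ (U2J uS) (t, c t σ)
          = (ContinuousLinearMap.snd ℝ ℝ ℝ).comp
            (fderiv ℝ (fun q : E2 => uS q.1 q.2) (t, c t σ)) := h.fderiv
      rw [h2]
      rfl
    have hKt0 := (hV1t.mul hfdt1).add (hV2t.mul hfdt2)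
    have hval : fderiv ℝ (VJ1 uS uT θS f s) (t, c t σ) (1, uS t (c t σ))
          * (fderiv ℝ (CJ c) (t, σ) ((0:ℝ),(1:ℝ))).1
        + VJ1 uS uT θS f s (t, c t σ)
          * (fderiv ℝ (fun q : E2 => uS q.1 q.2) (t, c t σ)
              ((0:ℝ), fderiv ℝ (CJ c) (t, σ) (0, 1))).1
        + (fderiv ℝ (VJ2 uS uT θS f s) (t, c t σ) (1, uS t (c t σ))
            * (fderiv ℝ (CJ c) (t, σ) ((0:ℝ),(1:ℝ))).2
          + VJ2 uS uT θS f s (t, c t σ)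
            * (fderiv ℝ (fun q : E2 => uS q.1 q.2) (t, c t σ)
                ((0:ℝ), fderiv ℝ (CJ c) (t, σ) (0, 1))).2)
        = G t σ := by
      have hA := (hkeys ((t, c t σ) : E2)).1
      have hB := (hkeys ((t, c t σ) : E2)).2
      rw [hM1, hM2,
        clm_decomp (fderiv ℝ (VJ1 uS uT θS f s) (t, c t σ)) 1 (uS t (c t σ)),
        clm_decomp (fderiv ℝ (VJ2 uS uT θS f s) (t, c t σ)) 1 (uS t (c t σ)),
        clm_decomp (fderiv ℝ (U1J uS) (t, c t σ)) 0 (fderiv ℝ (CJ c) (t, σ) (0, 1)),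
        clm_decomp (fderiv ℝ (U2J uS) (t, c t σ)) 0 (fderiv ℝ (CJ c) (t, σ) (0, 1))]
      simp only [hGdef, pd, U1J, U2J, Jn] at hA hB ⊢
      linear_combination (fderiv ℝ (CJ c) (t, σ) ((0:ℝ),(1:ℝ))).1 * hA
        + (fderiv ℝ (CJ c) (t, σ) ((0:ℝ),(1:ℝ))).2 * hB
    rw [hval] at hKt0
    exact hKt0
  -- the inner integral of G vanishes around the closed loop
  have hGcont : ∀ t, Continuous (G t) := fun t =>
    hGc.comp (continuous_const.prodMk continuous_id)
  have hKcont : ∀ t, Continuous (K t) := fun t =>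
    hKc.comp (continuous_const.prodMk continuous_id)
  have hinner : ∀ t, (∫ σ in (0:ℝ)..1, G t σ) = 0 := by
    intro t
    have h := intervalIntegral.integral_eq_sub_of_hasDerivAt
      (f := fun y => PHIJ uS uT θS Pi f g s cp (t, c t y)) (f' := G t)
      (fun σ _ => hPsig t σ) ((hGcont t).intervalIntegrable 0 1)
    rw [h]
    show PHIJ uS uT θS Pi f g s cp (t, c t 1) - PHIJ uS uT θS Pi f g s cp (t, c t 0) = 0
    rw [← hclose t, sub_self]
  -- differentiate under the integral sign
  have hder : ∀ t, HasDerivAt (fun τ => ∫ σ in (0:ℝ)..1, K τ σ) 0 t := by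
    intro t
    obtain ⟨C, hC⟩ := (IsCompact.exists_bound_of_continuousOn
      ((isCompact_Icc.prod isCompact_Icc) :
        IsCompact ((Set.Icc (t-1) (t+1)) ×ˢ (Set.Icc (0:ℝ) 1)))
      hGc.continuousOn)
    have h := intervalIntegral.hasDerivAt_integral_of_dominated_loc_of_deriv_le
      (F := K) (F' := G) (x₀ := t) (s := Metric.ball t 1) (bound := fun _ => C) (a := 0) (b := 1)
      (Metric.ball_mem_nhds t one_pos)
      (Filter.Eventually.of_forall fun x => ((hKcont x).aestronglyMeasurable))
      ((hKcont t).intervalIntegrable 0 1)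
      ((hGcont t).aestronglyMeasurable)
      (Filter.Eventually.of_forall fun σ hσ x hx => by
        have hσ' : σ ∈ Set.Ioc (0:ℝ) 1 := by
          simpa [Set.uIoc_of_le (by norm_num : (0:ℝ) ≤ 1)] using hσ
        have hx' : |x - t| < 1 := by
          simpa [Real.dist_eq] using hx
        have hx2 := abs_lt.1 hx'
        exact hC (x, σ) ⟨⟨by linarith [hx2.1], by linarith [hx2.2]⟩,
          ⟨le_of_lt hσ'.1, hσ'.2⟩⟩)
      (intervalIntegrable_const : IntervalIntegrable (fun _ => C) MeasureTheory.volume 0 1)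
      (Filter.Eventually.of_forall fun σ _ x _ => hKt x σ)
    have h2 := h.2
    rw [hinner t] at h2
    exact h2
  -- identify the circulation with the integral of K
  have hint : ∀ t σ,
      dot (s * (uS t (c t σ)).1 - (uT t (c t σ) + f * (c t σ).1) * px (θS t) (c t σ),
           s * (uS t (c t σ)).2 - (uT t (c t σ) + f * (c t σ).1) * pz (θS t) (c t σ))
          (deriv (c t) σ) = K t σ := by
    intro t σ
    have e0 : deriv (c t) σ = fderiv ℝ (CJ c) (t, σ) (0, 1) := (hdB hCC t σ).deriv
    have e1 : px (θS t) (c t σ) = pd eX (Jn θS) (t, c t σ) := px_eq hTH t (c t σ)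
    have e2 : pz (θS t) (c t σ) = pd eZ (Jn θS) (t, c t σ) := pz_eq hTH t (c t σ)
    rw [e0, e1, e2]
    simp only [hKdef, dot, VJ1, VJ2, Jn, U1J, U2J]
  -- conclude
  have hconst : (fun τ => ∫ σ in (0:ℝ)..1, K τ σ) t₁
      = (fun τ => ∫ σ in (0:ℝ)..1, K τ σ) t₂ :=
    is_const_of_deriv_eq_zero (fun x => (hder x).differentiableAt)
      (fun x => (hder x).deriv) t₁ t₂
  calc (∫ σ in (0:ℝ)..1,
        dot (s * (uS t₁ (c t₁ σ)).1
               - (uT t₁ (c t₁ σ) + f * (c t₁ σ).1) * px (θS t₁) (c t₁ σ),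
             s * (uS t₁ (c t₁ σ)).2
               - (uT t₁ (c t₁ σ) + f * (c t₁ σ).1) * pz (θS t₁) (c t₁ σ))
            (deriv (c t₁) σ))
      = ∫ σ in (0:ℝ)..1, K t₁ σ :=
        intervalIntegral.integral_congr (fun σ _ => hint t₁ σ)
    _ = ∫ σ in (0:ℝ)..1, K t₂ σ := hconst
    _ = _ := (intervalIntegral.integral_congr (fun σ _ => hint t₂ σ)).symm
end
end

section
/- (Potential vorticity conservation for the Sliced Compressible Model.) Suppose the smooth fields u_S = (u,w), u_T, θ_S, D satisfy the SCM system (C1)–(C4) with D > 0 everywhere. Then the potential vorticity q := D⁻¹ [ s(∂_z u − ∂_x w) + ∂_z θ_S (∂_x u_T + f) − ∂_x θ_S ∂_z u_T ] satisfies ∂_t q + u_S·∇ q = 0. -/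
noncomputable section

/-! ### Auxiliary infrastructure -/

abbrev E3 := ℝ × ℝ × ℝ

/-- Directional derivative of a scalar field on ℝ×ℝ×ℝ. -/
def dd (v : E3) (F : E3 → ℝ) : E3 → ℝ := fun q => fderiv ℝ F q v

lemma dd_smooth {F : E3 → ℝ} (hF : ContDiff ℝ (⊤ : ℕ∞) F) (v : E3) : ContDiff ℝ (⊤ : ℕ∞) (dd v F) :=
  (hF.fderiv_right (by simp)).clm_apply contDiff_const

lemma dd_comm {F : E3 → ℝ} (hF : ContDiff ℝ (⊤ : ℕ∞) F) (v w : E3) :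
    dd v (dd w F) = dd w (dd v F) := by
  funext z
  have hd : ∀ y, HasFDerivAt F (fderiv ℝ F y) y := fun y =>
    (hF.differentiable (by simp) y).hasFDerivAt
  have h2 : HasFDerivAt (fderiv ℝ F) (fderiv ℝ (fderiv ℝ F) z) z :=
    ((hF.fderiv_right (m := (⊤ : ℕ∞)) (by simp)).differentiable (by simp) z).hasFDerivAt
  have hsymm := second_derivative_symmetric hd h2 v w
  have ev : ∀ a b : E3, dd a (dd b F) z = fderiv ℝ (fderiv ℝ F) z a b := by
    intro a b
    have hc : HasFDerivAt (fun y => fderiv ℝ F y b)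
        ((ContinuousLinearMap.apply ℝ ℝ b).comp (fderiv ℝ (fderiv ℝ F) z)) z :=
      (ContinuousLinearMap.apply ℝ ℝ b).hasFDerivAt.comp z h2
    show (fderiv ℝ (fun y => (fderiv ℝ F y) b) z) a = _
    rw [hc.fderiv]
    rfl
  rw [ev, ev, hsymm]

lemma pt_eq (F : E3 → ℝ) (hF : ContDiff ℝ (⊤ : ℕ∞) F) (t : ℝ) (p : ℝ × ℝ) :
    deriv (fun s => F (s, p)) t = dd (1, 0, 0) F (t, p) := by
  have hL : HasDerivAt (fun s : ℝ => ((s, p) : E3)) ((1, 0, 0) : E3) t :=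
    (hasDerivAt_id t).prodMk (hasDerivAt_const t p)
  exact (((hF.differentiable (by simp) (t, p)).hasFDerivAt).comp_hasDerivAt t hL).deriv

lemma px_eq (F : E3 → ℝ) (hF : ContDiff ℝ (⊤ : ℕ∞) F) (t : ℝ) (p : ℝ × ℝ) :
    deriv (fun x => F (t, x, p.2)) p.1 = dd (0, 1, 0) F (t, p) := by
  have hL : HasDerivAt (fun x : ℝ => ((t, x, p.2) : E3)) ((0, 1, 0) : E3) p.1 :=
    (hasDerivAt_const p.1 t).prodMk ((hasDerivAt_id p.1).prodMk (hasDerivAt_const p.1 p.2))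
  exact (((hF.differentiable (by simp) (t, p)).hasFDerivAt).comp_hasDerivAt p.1 hL).deriv

lemma pz_eq (F : E3 → ℝ) (hF : ContDiff ℝ (⊤ : ℕ∞) F) (t : ℝ) (p : ℝ × ℝ) :
    deriv (fun z => F (t, p.1, z)) p.2 = dd (0, 0, 1) F (t, p) := by
  have hL : HasDerivAt (fun z : ℝ => ((t, p.1, z) : E3)) ((0, 0, 1) : E3) p.2 :=
    (hasDerivAt_const p.2 t).prodMk ((hasDerivAt_const p.2 p.1).prodMk (hasDerivAt_id p.2))
  exact (((hF.differentiable (by simp) (t, p)).hasFDerivAt).comp_hasDerivAt p.2 hL).deriv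

lemma ddconst (v : E3) (c : ℝ) : dd v (fun _ => c) = fun _ => 0 := by
  funext y; simp [dd]

lemma ddadd {F G : E3 → ℝ} (hF : ContDiff ℝ (⊤ : ℕ∞) F) (hG : ContDiff ℝ (⊤ : ℕ∞) G) (v : E3) :
    dd v (fun y => F y + G y) = fun y => dd v F y + dd v G y := by
  funext y
  simp [dd, fderiv_fun_add (hF.differentiable (by simp) y) (hG.differentiable (by simp) y)]

lemma ddsub {F G : E3 → ℝ} (hF : ContDiff ℝ (⊤ : ℕ∞) F) (hG : ContDiff ℝ (⊤ : ℕ∞) G) (v : E3) :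
    dd v (fun y => F y - G y) = fun y => dd v F y - dd v G y := by
  funext y
  simp [dd, fderiv_fun_sub (hF.differentiable (by simp) y) (hG.differentiable (by simp) y)]

lemma ddmul {F G : E3 → ℝ} (hF : ContDiff ℝ (⊤ : ℕ∞) F) (hG : ContDiff ℝ (⊤ : ℕ∞) G) (v : E3) :
    dd v (fun y => F y * G y) = fun y => F y * dd v G y + G y * dd v F y := by
  funext y
  simp [dd, fderiv_fun_mul (hF.differentiable (by simp) y) (hG.differentiable (by simp) y)]

lemma ddcmul {F : E3 → ℝ} (hF : ContDiff ℝ (⊤ : ℕ∞) F) (c : ℝ) (v : E3) :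
    dd v (fun y => c * F y) = fun y => c * dd v F y := by
  funext y
  simp [dd, fderiv_const_mul (hF.differentiable (by simp) y) c]

lemma ddneg {F : E3 → ℝ} (v : E3) :
    dd v (fun y => -(F y)) = fun y => -(dd v F y) := by
  funext y; simp [dd, fderiv_neg]

/-- First velocity component as a field on space-time. -/
def A1 (uS : ℝ → ℝ × ℝ → ℝ × ℝ) : E3 → ℝ := fun z => (uS z.1 z.2).1

/-- Second velocity component as a field on space-time. -/
def A2 (uS : ℝ → ℝ × ℝ → ℝ × ℝ) : E3 → ℝ := fun z => (uS z.1 z.2).2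

/-- A scalar field as a field on space-time. -/
def AS (f : ℝ → ℝ × ℝ → ℝ) : E3 → ℝ := fun z => f z.1 z.2

/-- The potential vorticity as a field on space-time. -/
def QF (uS : ℝ → ℝ × ℝ → ℝ × ℝ) (uT θS D : ℝ → ℝ × ℝ → ℝ) (f s : ℝ) : E3 → ℝ := fun y =>
  (AS D y)⁻¹ * (s * (dd (0,0,1) (A1 uS) y - dd (0,1,0) (A2 uS) y)
    + dd (0,0,1) (AS θS) y * (dd (0,1,0) (AS uT) y + f)
    - dd (0,1,0) (AS θS) y * dd (0,0,1) (AS uT) y)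

/-- Potential vorticity conservation for the Sliced Compressible
Model: under (C1)–(C4) with D > 0, the potential vorticity
q = D⁻¹ [ s(∂_z u − ∂_x w) + ∂_z θ_S (∂_x u_T + f) − ∂_x θ_S ∂_z u_T ]
is advected: ∂ₜ q + u_S·∇q = 0. -/
theorem scm_potential_vorticity_conservation
    (uS : ℝ → ℝ × ℝ → ℝ × ℝ) (uT θS D Pi : ℝ → ℝ × ℝ → ℝ)
    (f g s cp cv p₀ : ℝ) (hcv : 0 < cv) (hcpcv : cv < cp) (hp₀ : 0 < p₀)
    (huS : SmoothV uS) (huT : SmoothS uT) (hθS : SmoothS θS) (hD : SmoothS D)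
    (hDpos : ∀ t p, 0 < D t p) (hθpos : ∀ t p, 0 < θS t p)
    (hPi : ∀ t p, Pi t p = (D t p * (cp - cv) * θS t p / p₀) ^ ((cp - cv) / cv))
    (hC1x : ∀ t p, pt (c1 uS) t p + adv uS (c1 uS) t p - f * uT t p
        = -(cp * θS t p * px (Pi t) p))
    (hC1z : ∀ t p, pt (c2 uS) t p + adv uS (c2 uS) t p
        = -(cp * θS t p * pz (Pi t) p) - g)
    (hC2 : ∀ t p, pt uT t p + adv uS uT t p + f * (uS t p).1 = s * cp * Pi t p)
    (hC3 : ∀ t p, pt θS t p + adv uS θS t p = -(s * uT t p))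
    (hC4 : ∀ t p, pt D t p + px (fun q => D t q * (uS t q).1) p
        + pz (fun q => D t q * (uS t q).2) p = 0)
    (q : ℝ → ℝ × ℝ → ℝ)
    (hq : ∀ t p, q t p = (D t p)⁻¹ *
        (s * (pz (c1 uS t) p - px (c2 uS t) p)
          + pz (θS t) p * (px (uT t) p + f) - px (θS t) p * pz (uT t) p)) :
    ∀ t p, pt q t p + adv uS q t p = 0 := by
  intro t p
  -- smoothness of the basic space-time fields
  have hu : ContDiff ℝ (⊤ : ℕ∞) (fun q : E3 => uS q.1 q.2) := huS
  have hu1 : ContDiff ℝ (⊤ : ℕ∞) (A1 uS) := by unfold A1; exact hu.fst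
  have hu2 : ContDiff ℝ (⊤ : ℕ∞) (A2 uS) := by unfold A2; exact hu.snd
  have hT : ContDiff ℝ (⊤ : ℕ∞) (AS uT) := huT
  have hTh : ContDiff ℝ (⊤ : ℕ∞) (AS θS) := hθS
  have hDs : ContDiff ℝ (⊤ : ℕ∞) (AS D) := hD
  have hP : ContDiff ℝ (⊤ : ℕ∞) (AS Pi) := by
    have hform : AS Pi = fun z : E3 => (AS D z * (cp - cv) * AS θS z / p₀) ^ ((cp - cv) / cv) :=
      funext fun z => hPi z.1 z.2
    rw [hform, contDiff_iff_contDiffAt]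
    intro z
    have hpos : 0 < AS D z * (cp - cv) * AS θS z / p₀ := by
      have h1 := hDpos z.1 z.2
      have h2 := hθpos z.1 z.2
      have h3 : (0:ℝ) < cp - cv := by linarith
      exact div_pos (mul_pos (mul_pos h1 h3) h2) hp₀
    have hbase : ContDiffAt ℝ (⊤ : ℕ∞) (fun z : E3 => AS D z * (cp - cv) * AS θS z / p₀) z :=
      (((hDs.mul contDiff_const).mul hTh).div_const p₀).contDiffAt
    exact hbase.rpow_const_of_ne hpos.ne'
  -- smoothness of directional derivatives (context facts for `fun_prop`)
  have sm1 := dd_smooth hu1 (1,0,0)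
  have sm2 := dd_smooth hu1 (0,1,0)
  have sm3 := dd_smooth hu1 (0,0,1)
  have sm4 := dd_smooth hu2 (1,0,0)
  have sm5 := dd_smooth hu2 (0,1,0)
  have sm6 := dd_smooth hu2 (0,0,1)
  have sm7 := dd_smooth hT (1,0,0)
  have sm8 := dd_smooth hT (0,1,0)
  have sm9 := dd_smooth hT (0,0,1)
  have sm10 := dd_smooth hTh (1,0,0)
  have sm11 := dd_smooth hTh (0,1,0)
  have sm12 := dd_smooth hTh (0,0,1)
  have sm13 := dd_smooth hP (0,1,0)
  have sm14 := dd_smooth hP (0,0,1)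
  have sm15 := dd_smooth hDs (1,0,0)
  have sm16 := dd_smooth hDs (0,1,0)
  have sm17 := dd_smooth hDs (0,0,1)
  have hQsm : ContDiff ℝ (⊤ : ℕ∞) (QF uS uT θS D f s) := by
    have hinv : ContDiff ℝ (⊤ : ℕ∞) (fun y : E3 => (AS D y)⁻¹) :=
      hDs.inv fun y => (hDpos y.1 y.2).ne'
    unfold QF
    fun_prop
  -- equations (C1)–(C4) in directional-derivative form
  have e1 : ∀ y : E3, dd (1,0,0) (A1 uS) y
      + (A1 uS y * dd (0,1,0) (A1 uS) y + A2 uS y * dd (0,0,1) (A1 uS) y)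
      - f * AS uT y = -(cp * AS θS y * dd (0,1,0) (AS Pi) y) := by
    intro y
    have h := hC1x y.1 y.2
    simp only [adv] at h
    rw [show pt (c1 uS) y.1 y.2 = dd (1,0,0) (A1 uS) y from pt_eq _ hu1 y.1 y.2,
        show px (c1 uS y.1) y.2 = dd (0,1,0) (A1 uS) y from px_eq _ hu1 y.1 y.2,
        show pz (c1 uS y.1) y.2 = dd (0,0,1) (A1 uS) y from pz_eq _ hu1 y.1 y.2,
        show px (Pi y.1) y.2 = dd (0,1,0) (AS Pi) y from px_eq _ hP y.1 y.2] at h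
    exact h
  have e2 : ∀ y : E3, dd (1,0,0) (A2 uS) y
      + (A1 uS y * dd (0,1,0) (A2 uS) y + A2 uS y * dd (0,0,1) (A2 uS) y)
      = -(cp * AS θS y * dd (0,0,1) (AS Pi) y) - g := by
    intro y
    have h := hC1z y.1 y.2
    simp only [adv] at h
    rw [show pt (c2 uS) y.1 y.2 = dd (1,0,0) (A2 uS) y from pt_eq _ hu2 y.1 y.2,
        show px (c2 uS y.1) y.2 = dd (0,1,0) (A2 uS) y from px_eq _ hu2 y.1 y.2,
        show pz (c2 uS y.1) y.2 = dd (0,0,1) (A2 uS) y from pz_eq _ hu2 y.1 y.2,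
        show pz (Pi y.1) y.2 = dd (0,0,1) (AS Pi) y from pz_eq _ hP y.1 y.2] at h
    exact h
  have e3 : ∀ y : E3, dd (1,0,0) (AS uT) y
      + (A1 uS y * dd (0,1,0) (AS uT) y + A2 uS y * dd (0,0,1) (AS uT) y)
      + f * A1 uS y = s * cp * AS Pi y := by
    intro y
    have h := hC2 y.1 y.2
    simp only [adv] at h
    rw [show pt uT y.1 y.2 = dd (1,0,0) (AS uT) y from pt_eq _ hT y.1 y.2,
        show px (uT y.1) y.2 = dd (0,1,0) (AS uT) y from px_eq _ hT y.1 y.2,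
        show pz (uT y.1) y.2 = dd (0,0,1) (AS uT) y from pz_eq _ hT y.1 y.2] at h
    exact h
  have e4 : ∀ y : E3, dd (1,0,0) (AS θS) y
      + (A1 uS y * dd (0,1,0) (AS θS) y + A2 uS y * dd (0,0,1) (AS θS) y)
      = -(s * AS uT y) := by
    intro y
    have h := hC3 y.1 y.2
    simp only [adv] at h
    rw [show pt θS y.1 y.2 = dd (1,0,0) (AS θS) y from pt_eq _ hTh y.1 y.2,
        show px (θS y.1) y.2 = dd (0,1,0) (AS θS) y from px_eq _ hTh y.1 y.2,
        show pz (θS y.1) y.2 = dd (0,0,1) (AS θS) y from pz_eq _ hTh y.1 y.2] at h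
    exact h
  have e5 : ∀ y : E3, dd (1,0,0) (AS D) y
      + (AS D y * dd (0,1,0) (A1 uS) y + A1 uS y * dd (0,1,0) (AS D) y)
      + (AS D y * dd (0,0,1) (A2 uS) y + A2 uS y * dd (0,0,1) (AS D) y) = 0 := by
    intro y
    have h := hC4 y.1 y.2
    rw [show pt D y.1 y.2 = dd (1,0,0) (AS D) y from pt_eq _ hDs y.1 y.2,
        show px (fun q => D y.1 q * (uS y.1 q).1) y.2
          = dd (0,1,0) (fun z => AS D z * A1 uS z) y from px_eq _ (hDs.mul hu1) y.1 y.2,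
        show pz (fun q => D y.1 q * (uS y.1 q).2) y.2
          = dd (0,0,1) (fun z => AS D z * A2 uS z) y from pz_eq _ (hDs.mul hu2) y.1 y.2,
        congrFun (ddmul hDs hu1 (0,1,0)) y, congrFun (ddmul hDs hu2 (0,0,1)) y] at h
    exact h
  -- function-level versions and their derivatives
  have F1 : (fun y : E3 => dd (1,0,0) (A1 uS) y
      + (A1 uS y * dd (0,1,0) (A1 uS) y + A2 uS y * dd (0,0,1) (A1 uS) y)
      - f * AS uT y) = (fun y : E3 => -(cp * AS θS y * dd (0,1,0) (AS Pi) y)) :=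
    funext e1
  have F2 : (fun y : E3 => dd (1,0,0) (A2 uS) y
      + (A1 uS y * dd (0,1,0) (A2 uS) y + A2 uS y * dd (0,0,1) (A2 uS) y))
      = (fun y : E3 => -(cp * AS θS y * dd (0,0,1) (AS Pi) y) - g) :=
    funext e2
  have F3 : (fun y : E3 => dd (1,0,0) (AS uT) y
      + (A1 uS y * dd (0,1,0) (AS uT) y + A2 uS y * dd (0,0,1) (AS uT) y)
      + f * A1 uS y) = (fun y : E3 => s * cp * AS Pi y) :=
    funext e3
  have F4 : (fun y : E3 => dd (1,0,0) (AS θS) y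
      + (A1 uS y * dd (0,1,0) (AS θS) y + A2 uS y * dd (0,0,1) (AS θS) y))
      = (fun y : E3 => -(s * AS uT y)) :=
    funext e4
  have HDQ : (fun y : E3 => AS D y * QF uS uT θS D f s y)
      = (fun y : E3 => s * (dd (0,0,1) (A1 uS) y - dd (0,1,0) (A2 uS) y)
        + dd (0,0,1) (AS θS) y * (dd (0,1,0) (AS uT) y + f)
        - dd (0,1,0) (AS θS) y * dd (0,0,1) (AS uT) y) := by
    funext y
    have h0 : AS D y ≠ 0 := (hDpos y.1 y.2).ne'
    unfold QF
    rw [mul_inv_cancel_left₀ h0]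
  have K1 := congrArg (dd (0,0,1)) F1
  have K2 := congrArg (dd (0,1,0)) F2
  have K3x := congrArg (dd (0,1,0)) F3
  have K3z := congrArg (dd (0,0,1)) F3
  have K4x := congrArg (dd (0,1,0)) F4
  have K4z := congrArg (dd (0,0,1)) F4
  have Kt := congrArg (dd (1,0,0)) HDQ
  have Kx := congrArg (dd (0,1,0)) HDQ
  have Kz := congrArg (dd (0,0,1)) HDQ
  simp (disch := fun_prop) only [ddadd, ddsub, ddmul, ddcmul, ddneg, ddconst]
    at K1 K2 K3x K3z K4x K4z Kt Kx Kz
  -- canonical order of mixed second derivatives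
  have ca1 := dd_comm hu1 (0,1,0) (1,0,0)
  have ca2 := dd_comm hu1 (0,0,1) (1,0,0)
  have ca3 := dd_comm hu1 (0,0,1) (0,1,0)
  have cb1 := dd_comm hu2 (0,1,0) (1,0,0)
  have cb2 := dd_comm hu2 (0,0,1) (1,0,0)
  have cb3 := dd_comm hu2 (0,0,1) (0,1,0)
  have cc1 := dd_comm hT (0,1,0) (1,0,0)
  have cc2 := dd_comm hT (0,0,1) (1,0,0)
  have cc3 := dd_comm hT (0,0,1) (0,1,0)
  have cd1 := dd_comm hTh (0,1,0) (1,0,0)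
  have cd2 := dd_comm hTh (0,0,1) (1,0,0)
  have cd3 := dd_comm hTh (0,0,1) (0,1,0)
  have ce1 := dd_comm hP (0,1,0) (1,0,0)
  have ce2 := dd_comm hP (0,0,1) (1,0,0)
  have ce3 := dd_comm hP (0,0,1) (0,1,0)
  simp only [ca1, ca2, ca3, cb1, cb2, cb3, cc1, cc2, cc3, cd1, cd2, cd3, ce1, ce2, ce3]
    at K1 K2 K3x K3z K4x K4z Kt Kx Kz
  -- scalar versions at the point (t, p)
  have k1 := congrFun K1 (t, p)
  have k2 := congrFun K2 (t, p)
  have k3x := congrFun K3x (t, p)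
  have k3z := congrFun K3z (t, p)
  have k4x := congrFun K4x (t, p)
  have k4z := congrFun K4z (t, p)
  have kt := congrFun Kt (t, p)
  have kx := congrFun Kx (t, p)
  have kz := congrFun Kz (t, p)
  have e5p := e5 (t, p)
  have hDQp := congrFun HDQ (t, p)
  -- the abstract q agrees with the smooth space-time field QF
  have hqQ : ∀ (a : ℝ) (b : ℝ × ℝ), q a b = QF uS uT θS D f s (a, b) := by
    intro a b
    rw [hq a b,
        show pz (c1 uS a) b = dd (0,0,1) (A1 uS) (a, b) from pz_eq _ hu1 a b,
        show px (c2 uS a) b = dd (0,1,0) (A2 uS) (a, b) from px_eq _ hu2 a b,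
        show pz (θS a) b = dd (0,0,1) (AS θS) (a, b) from pz_eq _ hTh a b,
        show px (uT a) b = dd (0,1,0) (AS uT) (a, b) from px_eq _ hT a b,
        show px (θS a) b = dd (0,1,0) (AS θS) (a, b) from px_eq _ hTh a b,
        show pz (uT a) b = dd (0,0,1) (AS uT) (a, b) from pz_eq _ hT a b]
    rfl
  -- convert the goal
  have g1 : pt q t p = dd (1,0,0) (QF uS uT θS D f s) (t, p) := by
    show deriv (fun a => q a p) t = _
    rw [show (fun a => q a p) = (fun a => QF uS uT θS D f s (a, p)) from
      funext fun a => hqQ a p]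
    exact pt_eq _ hQsm t p
  have g2 : px (q t) p = dd (0,1,0) (QF uS uT θS D f s) (t, p) := by
    show deriv (fun x => q t (x, p.2)) p.1 = _
    rw [show (fun x => q t (x, p.2)) = (fun x => QF uS uT θS D f s (t, x, p.2)) from
      funext fun x => hqQ t (x, p.2)]
    exact px_eq _ hQsm t p
  have g3 : pz (q t) p = dd (0,0,1) (QF uS uT θS D f s) (t, p) := by
    show deriv (fun z => q t (p.1, z)) p.2 = _
    rw [show (fun z => q t (p.1, z)) = (fun z => QF uS uT θS D f s (t, p.1, z)) from
      funext fun z => hqQ t (p.1, z)]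
    exact pz_eq _ hQsm t p
  simp only [adv]
  rw [g1, g2, g3]
  have hD0 : AS D (t, p) ≠ 0 := (hDpos t p).ne'
  have hbig : AS D (t, p) * (dd (1,0,0) (QF uS uT θS D f s) (t, p)
      + (A1 uS (t, p) * dd (0,1,0) (QF uS uT θS D f s) (t, p)
        + A2 uS (t, p) * dd (0,0,1) (QF uS uT θS D f s) (t, p))) = 0 := by
    linear_combination kt + A1 uS (t, p) * kx + A2 uS (t, p) * kz
      + s * k1 - s * k2
      + dd (0,0,1) (AS θS) (t, p) * k3x - dd (0,1,0) (AS θS) (t, p) * k3z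
      + (dd (0,1,0) (AS uT) (t, p) + f) * k4z - dd (0,0,1) (AS uT) (t, p) * k4x
      - QF uS uT θS D f s (t, p) * e5p
      + (dd (0,1,0) (A1 uS) (t, p) + dd (0,0,1) (A2 uS) (t, p)) * hDQp
  have hfin := mul_left_cancel₀ hD0 (hbig.trans (mul_zero (AS D (t, p))).symm)
  exact hfin
end
end

section
/- (Energy conservation for the Sliced Compressible Model.) Suppose the smooth fields u_S = (u,w), u_T, θ_S, D satisfy the SCM system (C1)–(C4) on the channel Ω = [0,L] × [0,H], with L, H > 0; suppose all fields and their derivatives are L-periodic in x, and w(t,(x,0)) = w(t,(x,H)) = 0 for all t, x. Then the total energy E(t) := ∫_Ω [ ½ D (|u_S|² + u_T²) + g D z + c_v D Π θ_S ](t,(x,z)) dx dz is constant in t. -/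
set_option maxHeartbeats 2000000


noncomputable section

-- infra
lemma curve_t (t : ℝ) (p : ℝ × ℝ) :
    HasDerivAt (fun s : ℝ => (s, p)) ((1 : ℝ), (0 : ℝ × ℝ)) t :=
  (hasDerivAt_id t).prodMk (hasDerivAt_const t p)
lemma curve_x (t z x : ℝ) :
    HasDerivAt (fun x : ℝ => (t, (x, z))) ((0 : ℝ), ((1 : ℝ), (0 : ℝ))) x :=
  (hasDerivAt_const x t).prodMk ((hasDerivAt_id x).prodMk (hasDerivAt_const x z))
lemma curve_z (t x z : ℝ) :
    HasDerivAt (fun z : ℝ => (t, (x, z))) ((0 : ℝ), ((0 : ℝ), (1 : ℝ))) z :=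
  (hasDerivAt_const z t).prodMk ((hasDerivAt_const z x).prodMk (hasDerivAt_id z))

variable {F : ℝ → ℝ × ℝ → ℝ}

lemma SmoothS.hasDerivAt_t (hF : SmoothS F) (t : ℝ) (p : ℝ × ℝ) :
    HasDerivAt (fun s => F s p) (pt F t p) t := by
  have h := ((hF.differentiable (by simp)) (t, p)).hasFDerivAt
  have h2 := h.comp_hasDerivAt t (curve_t t p)
  have h3 : DifferentiableAt ℝ (fun s => F s p) t := h2.differentiableAt
  exact h3.hasDerivAt

lemma SmoothS.hasDerivAt_x (hF : SmoothS F) (t : ℝ) (p : ℝ × ℝ) :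
    HasDerivAt (fun x => F t (x, p.2)) (px (F t) p) p.1 := by
  have h := ((hF.differentiable (by simp)) (t, p)).hasFDerivAt
  have h2 := h.comp_hasDerivAt p.1 (curve_x t p.2 p.1)
  have h3 : DifferentiableAt ℝ (fun x => F t (x, p.2)) p.1 := h2.differentiableAt
  exact h3.hasDerivAt

lemma SmoothS.hasDerivAt_z (hF : SmoothS F) (t : ℝ) (p : ℝ × ℝ) :
    HasDerivAt (fun z => F t (p.1, z)) (pz (F t) p) p.2 := by
  have h := ((hF.differentiable (by simp)) (t, p)).hasFDerivAt
  have h2 := h.comp_hasDerivAt p.2 (curve_z t p.1 p.2)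
  have h3 : DifferentiableAt ℝ (fun z => F t (p.1, z)) p.2 := h2.differentiableAt
  exact h3.hasDerivAt

lemma SmoothS.pt_eq (hF : SmoothS F) (t : ℝ) (p : ℝ × ℝ) :
    pt F t p = fderiv ℝ (fun q : ℝ × (ℝ × ℝ) => F q.1 q.2) (t, p) (1, 0) := by
  have h := ((hF.differentiable (by simp)) (t, p)).hasFDerivAt
  have h2 := h.comp_hasDerivAt t (curve_t t p)
  have h3 : HasDerivAt (fun s => F s p)
      ((fderiv ℝ (fun q : ℝ × (ℝ × ℝ) => F q.1 q.2) (t, p)) (1, 0)) t := h2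
  exact h3.deriv

lemma SmoothS.px_eq (hF : SmoothS F) (t : ℝ) (p : ℝ × ℝ) :
    px (F t) p = fderiv ℝ (fun q : ℝ × (ℝ × ℝ) => F q.1 q.2) (t, p) (0, 1, 0) := by
  have h := ((hF.differentiable (by simp)) (t, p)).hasFDerivAt
  have h2 := h.comp_hasDerivAt p.1 (curve_x t p.2 p.1)
  have h3 : HasDerivAt (fun x => F t (x, p.2))
      ((fderiv ℝ (fun q : ℝ × (ℝ × ℝ) => F q.1 q.2) (t, p)) (0, 1, 0)) p.1 := h2
  exact h3.deriv

lemma SmoothS.pz_eq (hF : SmoothS F) (t : ℝ) (p : ℝ × ℝ) :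
    pz (F t) p = fderiv ℝ (fun q : ℝ × (ℝ × ℝ) => F q.1 q.2) (t, p) (0, 0, 1) := by
  have h := ((hF.differentiable (by simp)) (t, p)).hasFDerivAt
  have h2 := h.comp_hasDerivAt p.2 (curve_z t p.1 p.2)
  have h3 : HasDerivAt (fun z => F t (p.1, z))
      ((fderiv ℝ (fun q : ℝ × (ℝ × ℝ) => F q.1 q.2) (t, p)) (0, 0, 1)) p.2 := h2
  exact h3.deriv

lemma SmoothS.continuous_pt (hF : SmoothS F) :
    Continuous (fun q : ℝ × (ℝ × ℝ) => pt F q.1 q.2) := by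
  have : (fun q : ℝ × (ℝ × ℝ) => pt F q.1 q.2)
      = fun q => fderiv ℝ (fun q : ℝ × (ℝ × ℝ) => F q.1 q.2) q (1, 0) := by
    funext q; exact hF.pt_eq q.1 q.2
  rw [this]
  exact (hF.continuous_fderiv (by simp)).clm_apply continuous_const

lemma SmoothS.continuous_px (hF : SmoothS F) :
    Continuous (fun q : ℝ × (ℝ × ℝ) => px (F q.1) q.2) := by
  have : (fun q : ℝ × (ℝ × ℝ) => px (F q.1) q.2)
      = fun q => fderiv ℝ (fun q : ℝ × (ℝ × ℝ) => F q.1 q.2) q (0, 1, 0) := by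
    funext q; exact hF.px_eq q.1 q.2
  rw [this]
  exact (hF.continuous_fderiv (by simp)).clm_apply continuous_const

lemma SmoothS.continuous_pz (hF : SmoothS F) :
    Continuous (fun q : ℝ × (ℝ × ℝ) => pz (F q.1) q.2) := by
  have : (fun q : ℝ × (ℝ × ℝ) => pz (F q.1) q.2)
      = fun q => fderiv ℝ (fun q : ℝ × (ℝ × ℝ) => F q.1 q.2) q (0, 0, 1) := by
    funext q; exact hF.pz_eq q.1 q.2
  rw [this]
  exact (hF.continuous_fderiv (by simp)).clm_apply continuous_const

lemma SmoothS.cont (hF : SmoothS F) :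
    Continuous (fun q : ℝ × (ℝ × ℝ) => F q.1 q.2) := hF.continuous



lemma hasDerivAt_congr_deriv {f : ℝ → ℝ} {a b x : ℝ} (h : HasDerivAt f a x) (hab : a = b) :
    HasDerivAt f b x := hab ▸ h

lemma pi_rel {dfun tfun pfun : ℝ → ℝ} {x₀ dD dT dP cp cv p₀ : ℝ}
    (hcv : 0 < cv) (hcpcv : cv < cp) (hp₀ : 0 < p₀)
    (hDpos : 0 < dfun x₀) (hTpos : 0 < tfun x₀)
    (hd : HasDerivAt dfun dD x₀) (ht : HasDerivAt tfun dT x₀)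
    (hp : HasDerivAt pfun dP x₀)
    (hpi : ∀ y, pfun y = (dfun y * (cp - cv) * tfun y / p₀) ^ ((cp - cv) / cv)) :
    cv * (dfun x₀ * tfun x₀) * dP
      = (cp - cv) * pfun x₀ * (dD * tfun x₀ + dfun x₀ * dT) := by
  have hR : 0 < cp - cv := sub_pos.mpr hcpcv
  have hb : HasDerivAt (fun y => dfun y * (cp - cv) * tfun y / p₀)
      ((dD * (cp - cv) * tfun x₀ + dfun x₀ * (cp - cv) * dT) / p₀) x₀ :=
    ((hd.mul_const (cp - cv)).mul ht).div_const p₀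
  have hbpos : 0 < dfun x₀ * (cp - cv) * tfun x₀ / p₀ := by positivity
  have h2 := hb.rpow_const (p := (cp - cv) / cv) (Or.inl (ne_of_gt hbpos))
  have hfe : pfun = fun y => (dfun y * (cp - cv) * tfun y / p₀) ^ ((cp - cv) / cv) :=
    funext hpi
  have h3 : HasDerivAt pfun
      ((dD * (cp - cv) * tfun x₀ + dfun x₀ * (cp - cv) * dT) / p₀ * ((cp - cv) / cv)
        * (dfun x₀ * (cp - cv) * tfun x₀ / p₀) ^ ((cp - cv) / cv - 1)) x₀ := by
    rw [hfe]; exact h2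
  have hval := hp.unique h3
  rw [hval, hpi x₀, Real.rpow_sub_one (ne_of_gt hbpos)]
  field_simp

open MeasureTheory Set in
lemma swap_le {f : ℝ → ℝ → ℝ} (hf : Continuous fun p : ℝ × ℝ => f p.1 p.2)
    {a b c d : ℝ} (hab : a ≤ b) (hcd : c ≤ d) :
    (∫ x in a..b, ∫ y in c..d, f x y) = ∫ y in c..d, ∫ x in a..b, f x y := by
  simp_rw [intervalIntegral.integral_of_le hab, intervalIntegral.integral_of_le hcd]
  apply MeasureTheory.integral_integral_swap
  have h1 : IntegrableOn (Function.uncurry f) (Icc a b ×ˢ Icc c d) volume := by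
    exact (hf.continuousOn).integrableOn_compact (isCompact_Icc.prod isCompact_Icc)
  have h2 : IntegrableOn (Function.uncurry f) (Ioc a b ×ˢ Ioc c d) volume :=
    h1.mono_set (Set.prod_mono Set.Ioc_subset_Icc_self Set.Ioc_subset_Icc_self)
  rw [Measure.prod_restrict]
  rwa [← Measure.volume_eq_prod] at *

lemma swap_cont {f : ℝ → ℝ → ℝ} (hf : Continuous fun p : ℝ × ℝ => f p.1 p.2)
    (a b c d : ℝ) :
    (∫ x in a..b, ∫ y in c..d, f x y) = ∫ y in c..d, ∫ x in a..b, f x y := by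
  rcases le_total a b with hab | hab <;> rcases le_total c d with hcd | hcd
  · exact swap_le hf hab hcd
  · simp_rw [intervalIntegral.integral_symm d c, intervalIntegral.integral_neg]
    rw [swap_le hf hab hcd]
  · simp_rw [intervalIntegral.integral_symm b a, intervalIntegral.integral_neg]
    rw [swap_le hf hab hcd]
  · simp_rw [intervalIntegral.integral_symm b a, intervalIntegral.integral_symm d c,
      intervalIntegral.integral_neg]
    rw [swap_le hf hab hcd]

-- energy density and fluxes
def eng (uS : ℝ → ℝ × ℝ → ℝ × ℝ) (uT θS D Pi : ℝ → ℝ × ℝ → ℝ) (g cv : ℝ) :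
    ℝ → ℝ × ℝ → ℝ := fun t p =>
  D t p * ((uS t p).1 ^ 2 + (uS t p).2 ^ 2 + uT t p ^ 2) / 2 + g * D t p * p.2
    + cv * D t p * Pi t p * θS t p

def flux1 (uS : ℝ → ℝ × ℝ → ℝ × ℝ) (uT θS D Pi : ℝ → ℝ × ℝ → ℝ) (g cp cv : ℝ) :
    ℝ → ℝ × ℝ → ℝ := fun t p =>
  (uS t p).1 * (eng uS uT θS D Pi g cv t p + (cp - cv) * D t p * θS t p * Pi t p)

def flux2 (uS : ℝ → ℝ × ℝ → ℝ × ℝ) (uT θS D Pi : ℝ → ℝ × ℝ → ℝ) (g cp cv : ℝ) :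
    ℝ → ℝ × ℝ → ℝ := fun t p =>
  (uS t p).2 * (eng uS uT θS D Pi g cv t p + (cp - cv) * D t p * θS t p * Pi t p)

lemma scm_pointwise
    (uS : ℝ → ℝ × ℝ → ℝ × ℝ) (uT θS D Pi : ℝ → ℝ × ℝ → ℝ)
    (f g s cp cv p₀ : ℝ) (hcv : 0 < cv) (hcpcv : cv < cp) (hp₀ : 0 < p₀)
    (huS : SmoothV uS) (huT : SmoothS uT) (hθS : SmoothS θS) (hD : SmoothS D)
    (hDpos : ∀ t p, 0 < D t p) (hθpos : ∀ t p, 0 < θS t p)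
    (hPi : ∀ t p, Pi t p = (D t p * (cp - cv) * θS t p / p₀) ^ ((cp - cv) / cv))
    (hC1x : ∀ t p, pt (c1 uS) t p + adv uS (c1 uS) t p - f * uT t p
        = -(cp * θS t p * px (Pi t) p))
    (hC1z : ∀ t p, pt (c2 uS) t p + adv uS (c2 uS) t p
        = -(cp * θS t p * pz (Pi t) p) - g)
    (hC2 : ∀ t p, pt uT t p + adv uS uT t p + f * (uS t p).1 = s * cp * Pi t p)
    (hC3 : ∀ t p, pt θS t p + adv uS θS t p = -(s * uT t p))
    (hC4 : ∀ t p, pt D t p + px (fun q => D t q * (uS t q).1) p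
        + pz (fun q => D t q * (uS t q).2) p = 0)
    (hPiS : SmoothS Pi) :
    ∀ (t : ℝ) (p : ℝ × ℝ),
      pt (eng uS uT θS D Pi g cv) t p + px (flux1 uS uT θS D Pi g cp cv t) p
        + pz (flux2 uS uT θS D Pi g cp cv t) p = 0 := by
  have hu : SmoothS (c1 uS) := contDiff_fst.comp huS
  have hw : SmoothS (c2 uS) := contDiff_snd.comp huS
  intro t ⟨x, z⟩
  -- atoms
  have hu_t : HasDerivAt (fun s => (uS s (x, z)).1) (pt (c1 uS) t (x, z)) t :=
    hu.hasDerivAt_t t (x, z)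
  have hw_t : HasDerivAt (fun s => (uS s (x, z)).2) (pt (c2 uS) t (x, z)) t :=
    hw.hasDerivAt_t t (x, z)
  have hT_t : HasDerivAt (fun s => uT s (x, z)) (pt uT t (x, z)) t :=
    huT.hasDerivAt_t t (x, z)
  have hθ_t : HasDerivAt (fun s => θS s (x, z)) (pt θS t (x, z)) t :=
    hθS.hasDerivAt_t t (x, z)
  have hD_t : HasDerivAt (fun s => D s (x, z)) (pt D t (x, z)) t :=
    hD.hasDerivAt_t t (x, z)
  have hP_t : HasDerivAt (fun s => Pi s (x, z)) (pt Pi t (x, z)) t :=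
    hPiS.hasDerivAt_t t (x, z)
  have hu_x : HasDerivAt (fun x' => (uS t (x', z)).1) (px (c1 uS t) (x, z)) x :=
    hu.hasDerivAt_x t (x, z)
  have hw_x : HasDerivAt (fun x' => (uS t (x', z)).2) (px (c2 uS t) (x, z)) x :=
    hw.hasDerivAt_x t (x, z)
  have hT_x : HasDerivAt (fun x' => uT t (x', z)) (px (uT t) (x, z)) x :=
    huT.hasDerivAt_x t (x, z)
  have hθ_x : HasDerivAt (fun x' => θS t (x', z)) (px (θS t) (x, z)) x :=
    hθS.hasDerivAt_x t (x, z)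
  have hD_x : HasDerivAt (fun x' => D t (x', z)) (px (D t) (x, z)) x :=
    hD.hasDerivAt_x t (x, z)
  have hP_x : HasDerivAt (fun x' => Pi t (x', z)) (px (Pi t) (x, z)) x :=
    hPiS.hasDerivAt_x t (x, z)
  have hu_z : HasDerivAt (fun z' => (uS t (x, z')).1) (pz (c1 uS t) (x, z)) z :=
    hu.hasDerivAt_z t (x, z)
  have hw_z : HasDerivAt (fun z' => (uS t (x, z')).2) (pz (c2 uS t) (x, z)) z :=
    hw.hasDerivAt_z t (x, z)
  have hT_z : HasDerivAt (fun z' => uT t (x, z')) (pz (uT t) (x, z)) z :=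
    huT.hasDerivAt_z t (x, z)
  have hθ_z : HasDerivAt (fun z' => θS t (x, z')) (pz (θS t) (x, z)) z :=
    hθS.hasDerivAt_z t (x, z)
  have hD_z : HasDerivAt (fun z' => D t (x, z')) (pz (D t) (x, z)) z :=
    hD.hasDerivAt_z t (x, z)
  have hP_z : HasDerivAt (fun z' => Pi t (x, z')) (pz (Pi t) (x, z)) z :=
    hPiS.hasDerivAt_z t (x, z)
  -- slice derivatives of the energy density
  have hE_t :=
    (((hD_t.mul (((hu_t.pow 2).add (hw_t.pow 2)).add (hT_t.pow 2))).div_const 2).add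
      ((hD_t.const_mul g).mul_const z)).add (((hD_t.const_mul cv).mul hP_t).mul hθ_t)
  have hE_x :=
    (((hD_x.mul (((hu_x.pow 2).add (hw_x.pow 2)).add (hT_x.pow 2))).div_const 2).add
      ((hD_x.const_mul g).mul_const z)).add (((hD_x.const_mul cv).mul hP_x).mul hθ_x)
  have hE_z :=
    (((hD_z.mul (((hu_z.pow 2).add (hw_z.pow 2)).add (hT_z.pow 2))).div_const 2).add
      ((hD_z.const_mul g).mul (hasDerivAt_id z))).add
        (((hD_z.const_mul cv).mul hP_z).mul hθ_z)
  -- flux slice derivatives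
  have hF1_x := hu_x.mul (hE_x.add (((hD_x.const_mul (cp - cv)).mul hθ_x).mul hP_x))
  have hF2_z := hw_z.mul (hE_z.add (((hD_z.const_mul (cp - cv)).mul hθ_z).mul hP_z))
  -- rewrite the goal using these
  have hpt : pt (eng uS uT θS D Pi g cv) t (x, z) = _ := hE_t.deriv
  have hpx : px (flux1 uS uT θS D Pi g cp cv t) (x, z) = _ := hF1_x.deriv
  have hpz2 : pz (flux2 uS uT θS D Pi g cp cv t) (x, z) = _ := hF2_z.deriv
  rw [hpt, hpx, hpz2]
  -- PDE hypotheses at the point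
  have h1 := hC1x t (x, z)
  have h2 := hC1z t (x, z)
  have h3 := hC2 t (x, z)
  have h4 := hC3 t (x, z)
  have h5 := hC4 t (x, z)
  simp only [adv] at h1 h2 h3 h4
  have hd1 : px (fun q => D t q * (uS t q).1) (x, z) = _ := (hD_x.mul hu_x).deriv
  have hd2 : pz (fun q => D t q * (uS t q).2) (x, z) = _ := (hD_z.mul hw_z).deriv
  rw [hd1, hd2] at h5
  -- Exner relations
  have hrx := pi_rel hcv hcpcv hp₀ (hDpos t (x, z)) (hθpos t (x, z)) hD_x hθ_x hP_x
    (fun y => hPi t (y, z))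
  have hrz := pi_rel hcv hcpcv hp₀ (hDpos t (x, z)) (hθpos t (x, z)) hD_z hθ_z hP_z
    (fun y => hPi t (x, y))
  have hrt := pi_rel hcv hcpcv hp₀ (hDpos t (x, z)) (hθpos t (x, z)) hD_t hθ_t hP_t
    (fun y => hPi y (x, z))
  -- nonvanishing
  have hDne : D t (x, z) ≠ 0 := ne_of_gt (hDpos t (x, z))
  have hθne : θS t (x, z) ≠ 0 := ne_of_gt (hθpos t (x, z))
  have hcvne : cv ≠ 0 := ne_of_gt hcv
  -- solved forms
  have hPx : px (Pi t) (x, z) = (cp - cv) * Pi t (x, z)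
      * (px (D t) (x, z) * θS t (x, z) + D t (x, z) * px (θS t) (x, z))
      / (cv * (D t (x, z) * θS t (x, z))) := by
    rw [eq_div_iff (by positivity)]
    linarith [hrx]
  have hPz : pz (Pi t) (x, z) = (cp - cv) * Pi t (x, z)
      * (pz (D t) (x, z) * θS t (x, z) + D t (x, z) * pz (θS t) (x, z))
      / (cv * (D t (x, z) * θS t (x, z))) := by
    rw [eq_div_iff (by positivity)]
    linarith [hrz]
  have hPt : pt Pi t (x, z) = (cp - cv) * Pi t (x, z)
      * (pt D t (x, z) * θS t (x, z) + D t (x, z) * pt θS t (x, z))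
      / (cv * (D t (x, z) * θS t (x, z))) := by
    rw [eq_div_iff (by positivity)]
    linarith [hrt]
  have hut : pt (c1 uS) t (x, z) = f * uT t (x, z)
      - ((uS t (x, z)).1 * px (c1 uS t) (x, z) + (uS t (x, z)).2 * pz (c1 uS t) (x, z))
      - cp * θS t (x, z) * px (Pi t) (x, z) := by linarith [h1]
  have hwt : pt (c2 uS) t (x, z) =
      - ((uS t (x, z)).1 * px (c2 uS t) (x, z) + (uS t (x, z)).2 * pz (c2 uS t) (x, z))
      - cp * θS t (x, z) * pz (Pi t) (x, z) - g := by linarith [h2]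
  have hTt : pt uT t (x, z) =
      - ((uS t (x, z)).1 * px (uT t) (x, z) + (uS t (x, z)).2 * pz (uT t) (x, z))
      - f * (uS t (x, z)).1 + s * cp * Pi t (x, z) := by linarith [h3]
  have hθt : pt θS t (x, z) =
      - ((uS t (x, z)).1 * px (θS t) (x, z) + (uS t (x, z)).2 * pz (θS t) (x, z))
      - s * uT t (x, z) := by linarith [h4]
  have hDt : pt D t (x, z) =
      - (px (D t) (x, z) * (uS t (x, z)).1 + D t (x, z) * px (c1 uS t) (x, z))
      - (pz (D t) (x, z) * (uS t (x, z)).2 + D t (x, z) * pz (c2 uS t) (x, z)) := by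
    linarith [h5]
  rw [hPt, hut, hwt, hTt, hθt, hDt, hPx, hPz]
  simp only [_root_.Pi.mul_apply, _root_.Pi.add_apply, _root_.Pi.pow_apply, id]
  have hprodne : cv * (D t (x, z) * θS t (x, z)) ≠ 0 := by positivity
  field_simp
  ring


/-- Energy conservation for the Sliced Compressible Model: under
(C1)–(C4) on the channel [0,L]×[0,H], with all fields L-periodic in x and no
normal flow at the top and bottom boundaries, the total energy
E(t) = ∫_Ω [ ½D(|u_S|² + u_T²) + gDz + c_v D Π θ_S ] dx dz is constant in t. -/
theorem scm_energy_conservation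
    (uS : ℝ → ℝ × ℝ → ℝ × ℝ) (uT θS D Pi : ℝ → ℝ × ℝ → ℝ)
    (f g s cp cv p₀ : ℝ) (hcv : 0 < cv) (hcpcv : cv < cp) (hp₀ : 0 < p₀)
    (huS : SmoothV uS) (huT : SmoothS uT) (hθS : SmoothS θS) (hD : SmoothS D)
    (hDpos : ∀ t p, 0 < D t p) (hθpos : ∀ t p, 0 < θS t p)
    (hPi : ∀ t p, Pi t p = (D t p * (cp - cv) * θS t p / p₀) ^ ((cp - cv) / cv))
    (hC1x : ∀ t p, pt (c1 uS) t p + adv uS (c1 uS) t p - f * uT t p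
        = -(cp * θS t p * px (Pi t) p))
    (hC1z : ∀ t p, pt (c2 uS) t p + adv uS (c2 uS) t p
        = -(cp * θS t p * pz (Pi t) p) - g)
    (hC2 : ∀ t p, pt uT t p + adv uS uT t p + f * (uS t p).1 = s * cp * Pi t p)
    (hC3 : ∀ t p, pt θS t p + adv uS θS t p = -(s * uT t p))
    (hC4 : ∀ t p, pt D t p + px (fun q => D t q * (uS t q).1) p
        + pz (fun q => D t q * (uS t q).2) p = 0)
    (L H : ℝ) (hL : 0 < L) (hH : 0 < H)
    (hperS : ∀ t x z, uS t (x + L, z) = uS t (x, z))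
    (hperT : ∀ t x z, uT t (x + L, z) = uT t (x, z))
    (hperθ : ∀ t x z, θS t (x + L, z) = θS t (x, z))
    (hperD : ∀ t x z, D t (x + L, z) = D t (x, z))
    (hbot : ∀ t x, (uS t (x, 0)).2 = 0)
    (htop : ∀ t x, (uS t (x, H)).2 = 0) :
    ∀ t₁ t₂ : ℝ,
      (∫ x in (0:ℝ)..L, ∫ z in (0:ℝ)..H,
        (D t₁ (x, z) * ((uS t₁ (x, z)).1 ^ 2 + (uS t₁ (x, z)).2 ^ 2
            + (uT t₁ (x, z)) ^ 2) / 2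
          + g * D t₁ (x, z) * z
          + cv * D t₁ (x, z) * Pi t₁ (x, z) * θS t₁ (x, z)))
      =
      (∫ x in (0:ℝ)..L, ∫ z in (0:ℝ)..H,
        (D t₂ (x, z) * ((uS t₂ (x, z)).1 ^ 2 + (uS t₂ (x, z)).2 ^ 2
            + (uT t₂ (x, z)) ^ 2) / 2
          + g * D t₂ (x, z) * z
          + cv * D t₂ (x, z) * Pi t₂ (x, z) * θS t₂ (x, z))) := by
  
  have hu' : ContDiff ℝ (⊤ : ℕ∞) (fun q : ℝ × (ℝ × ℝ) => (uS q.1 q.2).1) := contDiff_fst.comp huS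
  have hw' : ContDiff ℝ (⊤ : ℕ∞) (fun q : ℝ × (ℝ × ℝ) => (uS q.1 q.2).2) := contDiff_snd.comp huS
  have hT' : ContDiff ℝ (⊤ : ℕ∞) (fun q : ℝ × (ℝ × ℝ) => uT q.1 q.2) := huT
  have hθ' : ContDiff ℝ (⊤ : ℕ∞) (fun q : ℝ × (ℝ × ℝ) => θS q.1 q.2) := hθS
  have hD' : ContDiff ℝ (⊤ : ℕ∞) (fun q : ℝ × (ℝ × ℝ) => D q.1 q.2) := hD
  have hPiS : SmoothS Pi := by
    have hfe : (fun q : ℝ × (ℝ × ℝ) => Pi q.1 q.2)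
        = fun q => (D q.1 q.2 * (cp - cv) * θS q.1 q.2 / p₀) ^ ((cp - cv) / cv) :=
      funext fun q => hPi q.1 q.2
    unfold SmoothS
    rw [hfe]
    have hbase : ContDiff ℝ (⊤ : ℕ∞)
        (fun q : ℝ × (ℝ × ℝ) => D q.1 q.2 * (cp - cv) * θS q.1 q.2 / p₀) :=
      ((hD'.mul contDiff_const).mul hθ').div_const p₀
    refine hbase.rpow_const_of_ne fun q => ?_
    have h1 := hDpos q.1 q.2
    have h2 := hθpos q.1 q.2
    have h3 : 0 < cp - cv := sub_pos.mpr hcpcv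
    positivity
  have hPi' : ContDiff ℝ (⊤ : ℕ∞) (fun q : ℝ × (ℝ × ℝ) => Pi q.1 q.2) := hPiS
  have hz' : ContDiff ℝ (⊤ : ℕ∞) (fun q : ℝ × (ℝ × ℝ) => q.2.2) := contDiff_snd.comp contDiff_snd
  have hS_eng : SmoothS (eng uS uT θS D Pi g cv) := by
    unfold SmoothS eng
    exact (((hD'.mul (((hu'.pow 2).add (hw'.pow 2)).add (hT'.pow 2))).div_const 2).add
      ((contDiff_const.mul hD').mul hz')).add (((contDiff_const.mul hD').mul hPi').mul hθ')
  have hS_f1 : SmoothS (flux1 uS uT θS D Pi g cp cv) := by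
    unfold SmoothS flux1
    exact hu'.mul (ContDiff.add hS_eng (((contDiff_const.mul hD').mul hθ').mul hPi'))
  have hS_f2 : SmoothS (flux2 uS uT θS D Pi g cp cv) := by
    unfold SmoothS flux2
    exact hw'.mul (ContDiff.add hS_eng (((contDiff_const.mul hD').mul hθ').mul hPi'))
  have key := scm_pointwise uS uT θS D Pi f g s cp cv p₀ hcv hcpcv hp₀ huS huT hθS hD
    hDpos hθpos hPi hC1x hC1z hC2 hC3 hC4 hPiS
  have cPt : Continuous (fun q : ℝ × (ℝ × ℝ) => pt (eng uS uT θS D Pi g cv) q.1 q.2) :=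
    SmoothS.continuous_pt hS_eng
  have cPx : Continuous (fun q : ℝ × (ℝ × ℝ) => px (flux1 uS uT θS D Pi g cp cv q.1) q.2) :=
    SmoothS.continuous_px hS_f1
  have cPz : Continuous (fun q : ℝ × (ℝ × ℝ) => pz (flux2 uS uT θS D Pi g cp cv q.1) q.2) :=
    SmoothS.continuous_pz hS_f2
  have cE : Continuous (fun q : ℝ × (ℝ × ℝ) => eng uS uT θS D Pi g cv q.1 q.2) := SmoothS.cont hS_eng
  have hperPi : ∀ t x z, Pi t (x + L, z) = Pi t (x, z) := by
    intro t x z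
    rw [hPi t (x + L, z), hPi t (x, z), hperD, hperθ]
  have hperF1 : ∀ t z, flux1 uS uT θS D Pi g cp cv t (L, z) = flux1 uS uT θS D Pi g cp cv t (0, z) := by
    intro t z
    have h : ((L : ℝ), z) = ((0 : ℝ) + L, z) := by rw [zero_add]
    rw [h]
    simp only [flux1, eng]
    rw [hperS, hperT, hperθ, hperD, hperPi]
  intro t₁ t₂
  have ftct : ∀ p : ℝ × ℝ, eng uS uT θS D Pi g cv t₂ p - eng uS uT θS D Pi g cv t₁ p
      = (∫ t in t₁..t₂, -(px (flux1 uS uT θS D Pi g cp cv t) p)) + (∫ t in t₁..t₂, -(pz (flux2 uS uT θS D Pi g cp cv t) p)) := by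
    intro p
    have hint1 : IntervalIntegrable (fun t => -(px (flux1 uS uT θS D Pi g cp cv t) p)) MeasureTheory.volume t₁ t₂ :=
      ((cPx.comp (continuous_id.prodMk continuous_const)).neg).intervalIntegrable t₁ t₂
    have hint2 : IntervalIntegrable (fun t => -(pz (flux2 uS uT θS D Pi g cp cv t) p)) MeasureTheory.volume t₁ t₂ :=
      ((cPz.comp (continuous_id.prodMk continuous_const)).neg).intervalIntegrable t₁ t₂
    have h1 : (∫ t in t₁..t₂, pt (eng uS uT θS D Pi g cv) t p) = eng uS uT θS D Pi g cv t₂ p - eng uS uT θS D Pi g cv t₁ p :=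
      intervalIntegral.integral_eq_sub_of_hasDerivAt
        (fun t _ => SmoothS.hasDerivAt_t hS_eng t p)
        ((cPt.comp (continuous_id.prodMk continuous_const)).intervalIntegrable t₁ t₂)
    have h2 : (∫ t in t₁..t₂, pt (eng uS uT θS D Pi g cv) t p)
        = ∫ t in t₁..t₂, (-(px (flux1 uS uT θS D Pi g cp cv t) p) + -(pz (flux2 uS uT θS D Pi g cp cv t) p)) := by
      apply intervalIntegral.integral_congr
      intro t _
      have h := key t p
      dsimp only
      linarith
    rw [intervalIntegral.integral_add hint1 hint2] at h2
    linarith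
  have cG1 : Continuous (fun p : ℝ × ℝ => ∫ t in t₁..t₂, -(px (flux1 uS uT θS D Pi g cp cv t) p)) := by
    apply intervalIntegral.continuous_parametric_intervalIntegral_of_continuous'
    exact (cPx.comp (continuous_snd.prodMk continuous_fst)).neg
  have cG2 : Continuous (fun p : ℝ × ℝ => ∫ t in t₁..t₂, -(pz (flux2 uS uT θS D Pi g cp cv t) p)) := by
    apply intervalIntegral.continuous_parametric_intervalIntegral_of_continuous'
    exact (cPz.comp (continuous_snd.prodMk continuous_fst)).neg
  have cZ1 : Continuous (fun x : ℝ => ∫ z in (0:ℝ)..H, ∫ t in t₁..t₂, -(px (flux1 uS uT θS D Pi g cp cv t) (x, z))) := by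
    apply intervalIntegral.continuous_parametric_intervalIntegral_of_continuous'
    exact cG1.comp (continuous_fst.prodMk continuous_snd)
  have cZ2 : Continuous (fun x : ℝ => ∫ z in (0:ℝ)..H, ∫ t in t₁..t₂, -(pz (flux2 uS uT θS D Pi g cp cv t) (x, z))) := by
    apply intervalIntegral.continuous_parametric_intervalIntegral_of_continuous'
    exact cG2.comp (continuous_fst.prodMk continuous_snd)
  have iH : ∀ t x, IntervalIntegrable (fun z => eng uS uT θS D Pi g cv t (x, z)) MeasureTheory.volume 0 H :=
    fun t x =>
      (cE.comp (continuous_const.prodMk (continuous_const.prodMk continuous_id))).intervalIntegrable 0 H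
  have cIX : ∀ t, Continuous (fun x => ∫ z in (0:ℝ)..H, eng uS uT θS D Pi g cv t (x, z)) := by
    intro t
    apply intervalIntegral.continuous_parametric_intervalIntegral_of_continuous'
    exact cE.comp (continuous_const.prodMk (continuous_fst.prodMk continuous_snd))
  have main : (∫ x in (0:ℝ)..L, ∫ z in (0:ℝ)..H, eng uS uT θS D Pi g cv t₂ (x, z))
      - (∫ x in (0:ℝ)..L, ∫ z in (0:ℝ)..H, eng uS uT θS D Pi g cv t₁ (x, z)) = 0 := by
    have step1 : (∫ x in (0:ℝ)..L, ∫ z in (0:ℝ)..H, eng uS uT θS D Pi g cv t₂ (x, z))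
        - (∫ x in (0:ℝ)..L, ∫ z in (0:ℝ)..H, eng uS uT θS D Pi g cv t₁ (x, z))
        = ∫ x in (0:ℝ)..L,
            ((∫ z in (0:ℝ)..H, eng uS uT θS D Pi g cv t₂ (x, z)) - ∫ z in (0:ℝ)..H, eng uS uT θS D Pi g cv t₁ (x, z)) :=
      (intervalIntegral.integral_sub ((cIX t₂).intervalIntegrable 0 L)
        ((cIX t₁).intervalIntegrable 0 L)).symm
    have step2 : (∫ x in (0:ℝ)..L,
          ((∫ z in (0:ℝ)..H, eng uS uT θS D Pi g cv t₂ (x, z)) - ∫ z in (0:ℝ)..H, eng uS uT θS D Pi g cv t₁ (x, z)))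
        = ∫ x in (0:ℝ)..L, ∫ z in (0:ℝ)..H,
            ((∫ t in t₁..t₂, -(px (flux1 uS uT θS D Pi g cp cv t) (x, z))) + (∫ t in t₁..t₂, -(pz (flux2 uS uT θS D Pi g cp cv t) (x, z)))) := by
      apply intervalIntegral.integral_congr
      intro x _
      dsimp only
      rw [← intervalIntegral.integral_sub (iH t₂ x) (iH t₁ x)]
      apply intervalIntegral.integral_congr
      intro z _
      exact ftct (x, z)
    have step3 : (∫ x in (0:ℝ)..L, ∫ z in (0:ℝ)..H,
          ((∫ t in t₁..t₂, -(px (flux1 uS uT θS D Pi g cp cv t) (x, z))) + (∫ t in t₁..t₂, -(pz (flux2 uS uT θS D Pi g cp cv t) (x, z)))))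
        = (∫ x in (0:ℝ)..L, ∫ z in (0:ℝ)..H, ∫ t in t₁..t₂, -(px (flux1 uS uT θS D Pi g cp cv t) (x, z)))
          + (∫ x in (0:ℝ)..L, ∫ z in (0:ℝ)..H, ∫ t in t₁..t₂, -(pz (flux2 uS uT θS D Pi g cp cv t) (x, z))) := by
      rw [← intervalIntegral.integral_add (cZ1.intervalIntegrable 0 L)
        (cZ2.intervalIntegrable 0 L)]
      apply intervalIntegral.integral_congr
      intro x _
      exact intervalIntegral.integral_add
        ((cG1.comp (continuous_const.prodMk continuous_id)).intervalIntegrable 0 H)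
        ((cG2.comp (continuous_const.prodMk continuous_id)).intervalIntegrable 0 H)
    have hterm2 : (∫ x in (0:ℝ)..L, ∫ z in (0:ℝ)..H, ∫ t in t₁..t₂, -(pz (flux2 uS uT θS D Pi g cp cv t) (x, z))) = 0 := by
      have hx0 : ∀ x : ℝ, (∫ z in (0:ℝ)..H, ∫ t in t₁..t₂, -(pz (flux2 uS uT θS D Pi g cp cv t) (x, z))) = 0 := by
        intro x
        rw [swap_cont (f := fun z t => -(pz (flux2 uS uT θS D Pi g cp cv t) (x, z)))
          ((cPz.comp (continuous_snd.prodMk (continuous_const.prodMk continuous_fst))).neg)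
          0 H t₁ t₂]
        have h0 : ∀ t : ℝ, (∫ z in (0:ℝ)..H, -(pz (flux2 uS uT θS D Pi g cp cv t) (x, z))) = 0 := by
          intro t
          rw [intervalIntegral.integral_neg]
          have hsub : (∫ z in (0:ℝ)..H, pz (flux2 uS uT θS D Pi g cp cv t) (x, z)) = flux2 uS uT θS D Pi g cp cv t (x, H) - flux2 uS uT θS D Pi g cp cv t (x, 0) := by
            apply intervalIntegral.integral_eq_sub_of_hasDerivAt
            · intro z _
              exact SmoothS.hasDerivAt_z hS_f2 t (x, z)
            · exact (cPz.comp (continuous_const.prodMk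
                (continuous_const.prodMk continuous_id))).intervalIntegrable 0 H
          have e1 : flux2 uS uT θS D Pi g cp cv t (x, H) = 0 := by
            simp only [flux2]
            rw [htop t x]
            ring
          have e2 : flux2 uS uT θS D Pi g cp cv t (x, 0) = 0 := by
            simp only [flux2]
            rw [hbot t x]
            ring
          rw [hsub, e1, e2]
          ring
        calc (∫ t in t₁..t₂, ∫ z in (0:ℝ)..H, -(pz (flux2 uS uT θS D Pi g cp cv t) (x, z)))
            = ∫ t in t₁..t₂, (0 : ℝ) := intervalIntegral.integral_congr (fun t _ => h0 t)
          _ = 0 := by simp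
      calc (∫ x in (0:ℝ)..L, ∫ z in (0:ℝ)..H, ∫ t in t₁..t₂, -(pz (flux2 uS uT θS D Pi g cp cv t) (x, z)))
          = ∫ x in (0:ℝ)..L, (0 : ℝ) := intervalIntegral.integral_congr (fun x _ => hx0 x)
        _ = 0 := by simp
    have hterm1 : (∫ x in (0:ℝ)..L, ∫ z in (0:ℝ)..H, ∫ t in t₁..t₂, -(px (flux1 uS uT θS D Pi g cp cv t) (x, z))) = 0 := by
      rw [swap_cont (f := fun x z => ∫ t in t₁..t₂, -(px (flux1 uS uT θS D Pi g cp cv t) (x, z)))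
        (cG1.comp (continuous_fst.prodMk continuous_snd)) 0 L 0 H]
      have hz0 : ∀ z : ℝ, (∫ x in (0:ℝ)..L, ∫ t in t₁..t₂, -(px (flux1 uS uT θS D Pi g cp cv t) (x, z))) = 0 := by
        intro z
        rw [swap_cont (f := fun x t => -(px (flux1 uS uT θS D Pi g cp cv t) (x, z)))
          ((cPx.comp (continuous_snd.prodMk (continuous_fst.prodMk continuous_const))).neg)
          0 L t₁ t₂]
        have h0 : ∀ t : ℝ, (∫ x in (0:ℝ)..L, -(px (flux1 uS uT θS D Pi g cp cv t) (x, z))) = 0 := by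
          intro t
          rw [intervalIntegral.integral_neg]
          have hsub : (∫ x in (0:ℝ)..L, px (flux1 uS uT θS D Pi g cp cv t) (x, z)) = flux1 uS uT θS D Pi g cp cv t (L, z) - flux1 uS uT θS D Pi g cp cv t (0, z) := by
            apply intervalIntegral.integral_eq_sub_of_hasDerivAt
            · intro x _
              exact SmoothS.hasDerivAt_x hS_f1 t (x, z)
            · exact (cPx.comp (continuous_const.prodMk
                (continuous_id.prodMk continuous_const))).intervalIntegrable 0 L
          rw [hsub, hperF1 t z]
          ring
        calc (∫ t in t₁..t₂, ∫ x in (0:ℝ)..L, -(px (flux1 uS uT θS D Pi g cp cv t) (x, z)))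
            = ∫ t in t₁..t₂, (0 : ℝ) := intervalIntegral.integral_congr (fun t _ => h0 t)
          _ = 0 := by simp
      calc (∫ z in (0:ℝ)..H, ∫ x in (0:ℝ)..L, ∫ t in t₁..t₂, -(px (flux1 uS uT θS D Pi g cp cv t) (x, z)))
          = ∫ z in (0:ℝ)..H, (0 : ℝ) := intervalIntegral.integral_congr (fun z _ => hz0 z)
        _ = 0 := by simp
    rw [step1, step2, step3, hterm1, hterm2]
    ring
  have hfinal : (∫ x in (0:ℝ)..L, ∫ z in (0:ℝ)..H, eng uS uT θS D Pi g cv t₁ (x, z))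
      = ∫ x in (0:ℝ)..L, ∫ z in (0:ℝ)..H, eng uS uT θS D Pi g cv t₂ (x, z) := by linarith
  exact hfinal
end
end

section
/- (Circulation production for the compressible slice model of Cullen 2008.) Let u_S = (u,w), u_T, θ, Π be smooth fields and f, g, s, c_p ∈ ℝ and Π₀′ ∈ ℝ constants, with s ≠ 0, satisfying (M1) ∂_t u_S + (u_S·∇)u_S − f u_T x̂ = −c_p θ ∇Π − g ẑ; (M2) ∂_t u_T + u_S·∇u_T + f u = −c_p θ Π₀′; (M3) ∂_t θ + u_S·∇θ = −s u_T. Then for every loop c advected by u_S, d/dt ∫₀¹ [ u_S − s⁻¹(u_T + f x)∇θ ](t, c(t,σ)) · ∂_σ c(t,σ) dσ = −∫₀¹ [ c_p θ ∇Π ](t, c(t,σ)) · ∂_σ c(t,σ) dσ. In particular the circulation is not conserved unless the loop integral of c_p θ ∇Π vanishes. -/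
noncomputable section

/-! ### Auxiliary material for the proof -/

section Helpers

variable {E F : Type*} [NormedAddCommGroup E] [NormedSpace ℝ E]
  [NormedAddCommGroup F] [NormedSpace ℝ F]

lemma hasDerivAt_line {Φ : E → F} {L : ℝ → E} {x : ℝ} {v : E}
    (hΦ : DifferentiableAt ℝ Φ (L x)) (hL : HasDerivAt L v x) :
    HasDerivAt (fun y => Φ (L y)) (fderiv ℝ Φ (L x) v) x :=
  hΦ.hasFDerivAt.comp_hasDerivAt x hL

lemma contDiff_dfd {Φ : E → F} (hΦ : ContDiff ℝ (⊤ : ℕ∞) Φ) (v : E) :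
    ContDiff ℝ (⊤ : ℕ∞) (fun q => fderiv ℝ Φ q v) :=
  (hΦ.fderiv_right (by simp)).clm_apply contDiff_const

lemma fderiv_fderiv_apply {Φ : E → F} (hΦ : ContDiff ℝ (⊤ : ℕ∞) Φ) (q v w : E) :
    fderiv ℝ (fun x => fderiv ℝ Φ x v) q w = fderiv ℝ (fderiv ℝ Φ) q w v := by
  have h : DifferentiableAt ℝ (fderiv ℝ Φ) q :=
    (hΦ.fderiv_right (m := (⊤ : ℕ∞)) (by simp)).differentiable (by simp) q
  have h2 : HasFDerivAt (fun x => fderiv ℝ Φ x v)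
      ((ContinuousLinearMap.apply ℝ F v).comp (fderiv ℝ (fderiv ℝ Φ) q)) q :=
    ((ContinuousLinearMap.apply ℝ F v).hasFDerivAt).comp q h.hasFDerivAt
  rw [h2.fderiv]; rfl

lemma snd_symm {Φ : E → F} (hΦ : ContDiff ℝ (⊤ : ℕ∞) Φ) (q v w : E) :
    fderiv ℝ (fderiv ℝ Φ) q v w = fderiv ℝ (fderiv ℝ Φ) q w v :=
  second_derivative_symmetric (fun y => (hΦ.differentiable (by simp) y).hasFDerivAt)
    (((hΦ.fderiv_right (m := (⊤ : ℕ∞)) (by simp)).differentiable (by simp) q).hasFDerivAt) v w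

lemma clm_decomp (L : (ℝ × ℝ × ℝ) →L[ℝ] ℝ) (w : ℝ × ℝ × ℝ) :
    L w = w.1 * L (1,0,0) + w.2.1 * L (0,1,0) + w.2.2 * L (0,0,1) := by
  have hw : w = w.1 • ((1:ℝ),(0:ℝ),(0:ℝ)) + w.2.1 • ((0:ℝ),(1:ℝ),(0:ℝ))
      + w.2.2 • ((0:ℝ),(0:ℝ),(1:ℝ)) := by
    simp [Prod.ext_iff]
  conv_lhs => rw [hw]
  simp only [map_add, map_smul, smul_eq_mul]

lemma slice1 {G : ℝ × ℝ → F} {a b : ℝ} (hG : DifferentiableAt ℝ G (a, b)) :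
    HasDerivAt (fun x => G (x, b)) (fderiv ℝ G (a, b) (1, 0)) a :=
  hasDerivAt_line hG (HasDerivAt.prodMk (hasDerivAt_id a) (hasDerivAt_const a b))

lemma slice2 {G : ℝ × ℝ → F} {a b : ℝ} (hG : DifferentiableAt ℝ G (a, b)) :
    HasDerivAt (fun y => G (a, y)) (fderiv ℝ G (a, b) (0, 1)) b :=
  hasDerivAt_line hG (HasDerivAt.prodMk (hasDerivAt_const b a) (hasDerivAt_id b))

lemma sliceT {G : ℝ × ℝ × ℝ → F} {τ : ℝ} {p : ℝ × ℝ} (hG : DifferentiableAt ℝ G (τ, p)) :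
    HasDerivAt (fun x => G (x, p)) (fderiv ℝ G (τ, p) (1, 0, 0)) τ :=
  hasDerivAt_line hG (HasDerivAt.prodMk (hasDerivAt_id τ) (hasDerivAt_const τ p))

lemma sliceX {G : ℝ × ℝ × ℝ → F} {τ : ℝ} {p : ℝ × ℝ} (hG : DifferentiableAt ℝ G (τ, p)) :
    HasDerivAt (fun x => G (τ, x, p.2)) (fderiv ℝ G (τ, p) (0, 1, 0)) p.1 :=
  hasDerivAt_line hG
    (HasDerivAt.prodMk (hasDerivAt_const p.1 τ) (HasDerivAt.prodMk (hasDerivAt_id p.1) (hasDerivAt_const p.1 p.2)))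

lemma sliceZ {G : ℝ × ℝ × ℝ → F} {τ : ℝ} {p : ℝ × ℝ} (hG : DifferentiableAt ℝ G (τ, p)) :
    HasDerivAt (fun z => G (τ, p.1, z)) (fderiv ℝ G (τ, p) (0, 0, 1)) p.2 :=
  hasDerivAt_line hG
    (HasDerivAt.prodMk (hasDerivAt_const p.2 τ) (HasDerivAt.prodMk (hasDerivAt_const p.2 p.1) (hasDerivAt_id p.2)))

end Helpers

/-- Time-space incarnation of a time dependent scalar field. -/
def fld (θ : ℝ → ℝ × ℝ → ℝ) : ℝ × ℝ × ℝ → ℝ := fun q => θ q.1 q.2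

/-- First component of the modified velocity `u_S - s⁻¹ (u_T + f x) ∇θ`. -/
def W1 (uS : ℝ → ℝ × ℝ → ℝ × ℝ) (uT θ : ℝ → ℝ × ℝ → ℝ) (f s : ℝ) : ℝ × ℝ × ℝ → ℝ :=
  fun q => (uS q.1 q.2).1 - s⁻¹ * (uT q.1 q.2 + f * q.2.1) * fderiv ℝ (fld θ) q (0,1,0)

/-- Second component of the modified velocity. -/
def W2 (uS : ℝ → ℝ × ℝ → ℝ × ℝ) (uT θ : ℝ → ℝ × ℝ → ℝ) (f s : ℝ) : ℝ × ℝ × ℝ → ℝ :=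
  fun q => (uS q.1 q.2).2 - s⁻¹ * (uT q.1 q.2 + f * q.2.1) * fderiv ℝ (fld θ) q (0,0,1)

/-- The potential whose gradient absorbs all conservative forces. -/
def phiF (uS : ℝ → ℝ × ℝ → ℝ × ℝ) (uT θ : ℝ → ℝ × ℝ → ℝ)
    (f g s cp Pi₀' : ℝ) : ℝ × ℝ × ℝ → ℝ :=
  fun q => ((uS q.1 q.2).1 * (uS q.1 q.2).1 + (uS q.1 q.2).2 * (uS q.1 q.2).2) / 2
    + (uT q.1 q.2 + f * q.2.1) * (uT q.1 q.2 + f * q.2.1) / 2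
    + s⁻¹ * cp * Pi₀' * (θ q.1 q.2 * θ q.1 q.2) / 2
    - g * q.2.2 - f ^ 2 * (q.2.1 * q.2.1) / 2

/-- The map `(τ, σ) ↦ (τ, c τ σ)`. -/
def Qm (c : ℝ → ℝ → ℝ × ℝ) : ℝ × ℝ → ℝ × ℝ × ℝ := fun r => (r.1, c r.1 r.2)

/-- First component of the loop. -/
def G1 (c : ℝ → ℝ → ℝ × ℝ) : ℝ × ℝ → ℝ := fun r => (c r.1 r.2).1

/-- Second component of the loop. -/
def G2 (c : ℝ → ℝ → ℝ × ℝ) : ℝ × ℝ → ℝ := fun r => (c r.1 r.2).2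

/-- σ-derivative of the first loop component. -/
def K1 (c : ℝ → ℝ → ℝ × ℝ) : ℝ × ℝ → ℝ := fun r => fderiv ℝ (G1 c) r (0,1)

/-- σ-derivative of the second loop component. -/
def K2 (c : ℝ → ℝ → ℝ × ℝ) : ℝ × ℝ → ℝ := fun r => fderiv ℝ (G2 c) r (0,1)

/-- The circulation integrand. -/
def Fb (uS : ℝ → ℝ × ℝ → ℝ × ℝ) (uT θ : ℝ → ℝ × ℝ → ℝ) (c : ℝ → ℝ → ℝ × ℝ)
    (f s : ℝ) : ℝ × ℝ → ℝ :=
  fun r => W1 uS uT θ f s (Qm c r) * K1 c r + W2 uS uT θ f s (Qm c r) * K2 c r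

/-- Time derivative of the circulation integrand. -/
def FbD (uS : ℝ → ℝ × ℝ → ℝ × ℝ) (uT θ : ℝ → ℝ × ℝ → ℝ) (c : ℝ → ℝ → ℝ × ℝ)
    (f s : ℝ) : ℝ × ℝ → ℝ :=
  fun r => fderiv ℝ (Fb uS uT θ c f s) r (1,0)

/-- The potential along the loop. -/
def PsiF (uS : ℝ → ℝ × ℝ → ℝ × ℝ) (uT θ : ℝ → ℝ × ℝ → ℝ) (c : ℝ → ℝ → ℝ × ℝ)
    (f g s cp Pi₀' : ℝ) : ℝ × ℝ → ℝ :=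
  fun r => phiF uS uT θ f g s cp Pi₀' (Qm c r)

/-- σ-derivative of the potential along the loop. -/
def PsiD (uS : ℝ → ℝ × ℝ → ℝ × ℝ) (uT θ : ℝ → ℝ × ℝ → ℝ) (c : ℝ → ℝ → ℝ × ℝ)
    (f g s cp Pi₀' : ℝ) : ℝ × ℝ → ℝ :=
  fun r => fderiv ℝ (PsiF uS uT θ c f g s cp Pi₀') r (0,1)

/-- Circulation production for the compressible slice model of
Cullen 2008: under (M1)–(M3) with s ≠ 0, for any loop advected by u_S,
d/dt ∮ (u_S − s⁻¹(u_T + f x)∇θ)·dx = −∮ c_p θ ∇Π·dx. -/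
theorem cullen_circulation_production
    (uS : ℝ → ℝ × ℝ → ℝ × ℝ) (uT θ Pi : ℝ → ℝ × ℝ → ℝ)
    (f g s cp Pi₀' : ℝ)
    (huS : SmoothV uS) (huT : SmoothS uT) (hθ : SmoothS θ) (hPi : SmoothS Pi)
    (hM1x : ∀ t p, pt (c1 uS) t p + adv uS (c1 uS) t p - f * uT t p
        = -(cp * θ t p * px (Pi t) p))
    (hM1z : ∀ t p, pt (c2 uS) t p + adv uS (c2 uS) t p
        = -(cp * θ t p * pz (Pi t) p) - g)
    (hM2 : ∀ t p, pt uT t p + adv uS uT t p + f * (uS t p).1 = -(cp * θ t p * Pi₀'))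
    (hM3 : ∀ t p, pt θ t p + adv uS θ t p = -(s * uT t p))
    (hs : s ≠ 0)
    (c : ℝ → ℝ → ℝ × ℝ) (hc : AdvectedLoop uS c) :
    ∀ t : ℝ,
      HasDerivAt
        (fun τ => ∫ σ in (0:ℝ)..1,
          dot ((uS τ (c τ σ)).1
                 - s⁻¹ * (uT τ (c τ σ) + f * (c τ σ).1) * px (θ τ) (c τ σ),
               (uS τ (c τ σ)).2
                 - s⁻¹ * (uT τ (c τ σ) + f * (c τ σ).1) * pz (θ τ) (c τ σ))
              (deriv (c τ) σ))
        (-∫ σ in (0:ℝ)..1,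
          dot (cp * θ t (c t σ) * px (Pi t) (c t σ),
               cp * θ t (c t σ) * pz (Pi t) (c t σ))
              (deriv (c t) σ)) t := by
  obtain ⟨hcS, hcl, hadv⟩ := hc
  -- smoothness of the basic space-time fields
  have huS' : ContDiff ℝ (⊤ : ℕ∞) (fun q : ℝ × ℝ × ℝ => uS q.1 q.2) := huS
  have hU1 : ContDiff ℝ (⊤ : ℕ∞) (fld (c1 uS)) := contDiff_fst.comp huS'
  have hU2 : ContDiff ℝ (⊤ : ℕ∞) (fld (c2 uS)) := contDiff_snd.comp huS'
  have hT : ContDiff ℝ (⊤ : ℕ∞) (fld uT) := huT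
  have hTH : ContDiff ℝ (⊤ : ℕ∞) (fld θ) := hθ
  have hPI : ContDiff ℝ (⊤ : ℕ∞) (fld Pi) := hPi
  have hG1 : ContDiff ℝ (⊤ : ℕ∞) (G1 c) := contDiff_fst.comp hcS
  have hG2 : ContDiff ℝ (⊤ : ℕ∞) (G2 c) := contDiff_snd.comp hcS
  have hQm : ContDiff ℝ (⊤ : ℕ∞) (Qm c) := contDiff_fst.prodMk hcS
  have hK1 : ContDiff ℝ (⊤ : ℕ∞) (K1 c) := contDiff_dfd hG1 (0,1)
  have hK2 : ContDiff ℝ (⊤ : ℕ∞) (K2 c) := contDiff_dfd hG2 (0,1)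
  have hTH1 : ContDiff ℝ (⊤ : ℕ∞) (fun q => fderiv ℝ (fld θ) q (0,1,0)) := contDiff_dfd hTH _
  have hTH2 : ContDiff ℝ (⊤ : ℕ∞) (fun q => fderiv ℝ (fld θ) q (0,0,1)) := contDiff_dfd hTH _
  have hTH0 : ContDiff ℝ (⊤ : ℕ∞) (fun q => fderiv ℝ (fld θ) q (1,0,0)) := contDiff_dfd hTH _
  have hx' : ContDiff ℝ (⊤ : ℕ∞) (fun q : ℝ × ℝ × ℝ => q.2.1) := contDiff_fst.comp contDiff_snd
  have hz' : ContDiff ℝ (⊤ : ℕ∞) (fun q : ℝ × ℝ × ℝ => q.2.2) := contDiff_snd.comp contDiff_snd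
  have hW1 : ContDiff ℝ (⊤ : ℕ∞) (W1 uS uT θ f s) :=
    hU1.sub ((contDiff_const.mul (hT.add (contDiff_const.mul hx'))).mul hTH1)
  have hW2 : ContDiff ℝ (⊤ : ℕ∞) (W2 uS uT θ f s) :=
    hU2.sub ((contDiff_const.mul (hT.add (contDiff_const.mul hx'))).mul hTH2)
  have hFbig : ContDiff ℝ (⊤ : ℕ∞) (Fb uS uT θ c f s) :=
    ((hW1.comp hQm).mul hK1).add ((hW2.comp hQm).mul hK2)
  have hphi : ContDiff ℝ (⊤ : ℕ∞) (phiF uS uT θ f g s cp Pi₀') := by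
    refine ContDiff.sub (ContDiff.sub (ContDiff.add (ContDiff.add ?_ ?_) ?_) ?_) ?_
    · exact ((hU1.mul hU1).add (hU2.mul hU2)).div_const 2
    · exact ((hT.add (contDiff_const.mul hx')).mul (hT.add (contDiff_const.mul hx'))).div_const 2
    · exact (contDiff_const.mul (hTH.mul hTH)).div_const 2
    · exact contDiff_const.mul hz'
    · exact (contDiff_const.mul (hx'.mul hx')).div_const 2
  have hPsi : ContDiff ℝ (⊤ : ℕ∞) (PsiF uS uT θ c f g s cp Pi₀') := hphi.comp hQm
  -- partial derivatives as directional derivatives of the space-time fields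
  have hpt : ∀ (θ' : ℝ → ℝ × ℝ → ℝ), ContDiff ℝ (⊤ : ℕ∞) (fld θ') → ∀ (τ : ℝ) (p : ℝ × ℝ),
      pt θ' τ p = fderiv ℝ (fld θ') (τ, p) (1,0,0) := fun θ' h τ p =>
    (sliceT ((h.differentiable (by simp)) (τ, p))).deriv
  have hpx : ∀ (θ' : ℝ → ℝ × ℝ → ℝ), ContDiff ℝ (⊤ : ℕ∞) (fld θ') → ∀ (τ : ℝ) (p : ℝ × ℝ),
      px (θ' τ) p = fderiv ℝ (fld θ') (τ, p) (0,1,0) := fun θ' h τ p =>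
    (sliceX ((h.differentiable (by simp)) (τ, p))).deriv
  have hpz : ∀ (θ' : ℝ → ℝ × ℝ → ℝ), ContDiff ℝ (⊤ : ℕ∞) (fld θ') → ∀ (τ : ℝ) (p : ℝ × ℝ),
      pz (θ' τ) p = fderiv ℝ (fld θ') (τ, p) (0,0,1) := fun θ' h τ p =>
    (sliceZ ((h.differentiable (by simp)) (τ, p))).deriv
  -- the model equations, rewritten in terms of directional derivatives
  have hm1x : ∀ (τ : ℝ) (p : ℝ × ℝ),
      fderiv ℝ (fld (c1 uS)) (τ, p) (1,0,0)
        + ((uS τ p).1 * fderiv ℝ (fld (c1 uS)) (τ, p) (0,1,0)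
           + (uS τ p).2 * fderiv ℝ (fld (c1 uS)) (τ, p) (0,0,1))
        - f * uT τ p
      = -(cp * θ τ p * fderiv ℝ (fld Pi) (τ, p) (0,1,0)) := by
    intro τ p
    have h := hM1x τ p
    simp only [adv] at h
    rwa [hpt (c1 uS) hU1 τ p, hpx (c1 uS) hU1 τ p, hpz (c1 uS) hU1 τ p, hpx Pi hPI τ p] at h
  have hm1z : ∀ (τ : ℝ) (p : ℝ × ℝ),
      fderiv ℝ (fld (c2 uS)) (τ, p) (1,0,0)
        + ((uS τ p).1 * fderiv ℝ (fld (c2 uS)) (τ, p) (0,1,0)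
           + (uS τ p).2 * fderiv ℝ (fld (c2 uS)) (τ, p) (0,0,1))
      = -(cp * θ τ p * fderiv ℝ (fld Pi) (τ, p) (0,0,1)) - g := by
    intro τ p
    have h := hM1z τ p
    simp only [adv] at h
    rwa [hpt (c2 uS) hU2 τ p, hpx (c2 uS) hU2 τ p, hpz (c2 uS) hU2 τ p, hpz Pi hPI τ p] at h
  have hm2 : ∀ (τ : ℝ) (p : ℝ × ℝ),
      fderiv ℝ (fld uT) (τ, p) (1,0,0)
        + ((uS τ p).1 * fderiv ℝ (fld uT) (τ, p) (0,1,0)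
           + (uS τ p).2 * fderiv ℝ (fld uT) (τ, p) (0,0,1))
        + f * (uS τ p).1
      = -(cp * θ τ p * Pi₀') := by
    intro τ p
    have h := hM2 τ p
    simp only [adv] at h
    rwa [hpt uT hT τ p, hpx uT hT τ p, hpz uT hT τ p] at h
  -- the θ-equation as an identically-vanishing space-time field
  have hZfun : (fun q : ℝ × ℝ × ℝ => fderiv ℝ (fld θ) q (1,0,0)
      + ((uS q.1 q.2).1 * fderiv ℝ (fld θ) q (0,1,0)
         + (uS q.1 q.2).2 * fderiv ℝ (fld θ) q (0,0,1))
      + s * uT q.1 q.2) = fun _ => (0:ℝ) := by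
    funext q
    obtain ⟨τ, p⟩ := q
    have h := hM3 τ p
    simp only [adv] at h
    rw [hpt θ hTH τ p, hpx θ hTH τ p, hpz θ hTH τ p] at h
    linarith
  -- σ-derivatives of the loop components
  have hgσ1 : ∀ (τ σ : ℝ), HasDerivAt (fun y => (c τ y).1) (K1 c (τ, σ)) σ :=
    fun τ σ => slice2 ((hG1.differentiable (by simp)) (τ, σ))
  have hgσ2 : ∀ (τ σ : ℝ), HasDerivAt (fun y => (c τ y).2) (K2 c (τ, σ)) σ :=
    fun τ σ => slice2 ((hG2.differentiable (by simp)) (τ, σ))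
  have hder : ∀ (τ σ : ℝ), deriv (c τ) σ = (K1 c (τ, σ), K2 c (τ, σ)) :=
    fun τ σ => (HasDerivAt.prodMk (hgσ1 τ σ) (hgσ2 τ σ)).deriv
  -- the τ-derivative of the loop components equals the advecting velocity
  have hadv1 : ∀ r : ℝ × ℝ, fderiv ℝ (G1 c) r (1,0) = fld (c1 uS) (Qm c r) := by
    intro r
    have h1 : HasDerivAt (fun x => (c x r.2).1) (fderiv ℝ (G1 c) (r.1, r.2) (1,0)) r.1 :=
      slice1 ((hG1.differentiable (by simp)) (r.1, r.2))
    have h2 : HasDerivAt (fun x => (c x r.2).1) ((uS r.1 (c r.1 r.2)).1) r.1 :=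
      (ContinuousLinearMap.fst ℝ ℝ ℝ).hasFDerivAt.comp_hasDerivAt r.1 (hadv r.1 r.2)
    exact h1.unique h2
  have hadv2 : ∀ r : ℝ × ℝ, fderiv ℝ (G2 c) r (1,0) = fld (c2 uS) (Qm c r) := by
    intro r
    have h1 : HasDerivAt (fun x => (c x r.2).2) (fderiv ℝ (G2 c) (r.1, r.2) (1,0)) r.1 :=
      slice1 ((hG2.differentiable (by simp)) (r.1, r.2))
    have h2 : HasDerivAt (fun x => (c x r.2).2) ((uS r.1 (c r.1 r.2)).2) r.1 :=
      (ContinuousLinearMap.snd ℝ ℝ ℝ).hasFDerivAt.comp_hasDerivAt r.1 (hadv r.1 r.2)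
    exact h1.unique h2
  -- THE KEY POINTWISE IDENTITY
  have key : ∀ τ σ : ℝ, FbD uS uT θ c f s (τ, σ)
      = PsiD uS uT θ c f g s cp Pi₀' (τ, σ)
        - (cp * θ τ (c τ σ) * fderiv ℝ (fld Pi) (τ, c τ σ) (0,1,0) * K1 c (τ, σ)
           + cp * θ τ (c τ σ) * fderiv ℝ (fld Pi) (τ, c τ σ) (0,0,1) * K2 c (τ, σ)) := by
    intro τ σ
    -- the two lines through (τ, c τ σ)
    have hLm : HasDerivAt (fun x => ((x : ℝ), c x σ)) ((1 : ℝ), uS τ (c τ σ)) τ :=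
      HasDerivAt.prodMk (hasDerivAt_id τ) (hadv τ σ)
    have hLn : HasDerivAt (fun y => ((τ : ℝ), c τ y))
        ((0 : ℝ), (K1 c (τ, σ), K2 c (τ, σ))) σ :=
      HasDerivAt.prodMk (hasDerivAt_const σ τ) (HasDerivAt.prodMk (hgσ1 τ σ) (hgσ2 τ σ))
    -- atoms along the m-line
    have hU1m : HasDerivAt (fun x => (uS x (c x σ)).1)
        (fderiv ℝ (fld (c1 uS)) (τ, c τ σ) ((1:ℝ), uS τ (c τ σ))) τ :=
      hasDerivAt_line ((hU1.differentiable (by simp)) (τ, c τ σ)) hLm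
    have hU2m : HasDerivAt (fun x => (uS x (c x σ)).2)
        (fderiv ℝ (fld (c2 uS)) (τ, c τ σ) ((1:ℝ), uS τ (c τ σ))) τ :=
      hasDerivAt_line ((hU2.differentiable (by simp)) (τ, c τ σ)) hLm
    have hTm : HasDerivAt (fun x => uT x (c x σ))
        (fderiv ℝ (fld uT) (τ, c τ σ) ((1:ℝ), uS τ (c τ σ))) τ :=
      hasDerivAt_line ((hT.differentiable (by simp)) (τ, c τ σ)) hLm
    have hTH1m : HasDerivAt (fun x => fderiv ℝ (fld θ) (x, c x σ) (0,1,0))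
        (fderiv ℝ (fun q => fderiv ℝ (fld θ) q (0,1,0)) (τ, c τ σ) ((1:ℝ), uS τ (c τ σ))) τ :=
      hasDerivAt_line ((hTH1.differentiable (by simp)) (τ, c τ σ)) hLm
    have hTH2m : HasDerivAt (fun x => fderiv ℝ (fld θ) (x, c x σ) (0,0,1))
        (fderiv ℝ (fun q => fderiv ℝ (fld θ) q (0,0,1)) (τ, c τ σ) ((1:ℝ), uS τ (c τ σ))) τ :=
      hasDerivAt_line ((hTH2.differentiable (by simp)) (τ, c τ σ)) hLm
    have hxm : HasDerivAt (fun x => (c x σ).1) ((uS τ (c τ σ)).1) τ :=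
      (ContinuousLinearMap.fst ℝ ℝ ℝ).hasFDerivAt.comp_hasDerivAt τ (hadv τ σ)
    -- atoms along the n-line
    have hU1n : HasDerivAt (fun y => (uS τ (c τ y)).1)
        (fderiv ℝ (fld (c1 uS)) (τ, c τ σ) ((0:ℝ), (K1 c (τ, σ), K2 c (τ, σ)))) σ :=
      hasDerivAt_line ((hU1.differentiable (by simp)) (τ, c τ σ)) hLn
    have hU2n : HasDerivAt (fun y => (uS τ (c τ y)).2)
        (fderiv ℝ (fld (c2 uS)) (τ, c τ σ) ((0:ℝ), (K1 c (τ, σ), K2 c (τ, σ)))) σ :=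
      hasDerivAt_line ((hU2.differentiable (by simp)) (τ, c τ σ)) hLn
    have hTn : HasDerivAt (fun y => uT τ (c τ y))
        (fderiv ℝ (fld uT) (τ, c τ σ) ((0:ℝ), (K1 c (τ, σ), K2 c (τ, σ)))) σ :=
      hasDerivAt_line ((hT.differentiable (by simp)) (τ, c τ σ)) hLn
    have hTHn : HasDerivAt (fun y => θ τ (c τ y))
        (fderiv ℝ (fld θ) (τ, c τ σ) ((0:ℝ), (K1 c (τ, σ), K2 c (τ, σ)))) σ :=
      hasDerivAt_line ((hTH.differentiable (by simp)) (τ, c τ σ)) hLn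
    have hTH0n : HasDerivAt (fun y => fderiv ℝ (fld θ) (τ, c τ y) (1,0,0))
        (fderiv ℝ (fun q => fderiv ℝ (fld θ) q (1,0,0)) (τ, c τ σ)
          ((0:ℝ), (K1 c (τ, σ), K2 c (τ, σ)))) σ :=
      hasDerivAt_line ((hTH0.differentiable (by simp)) (τ, c τ σ)) hLn
    have hTH1n : HasDerivAt (fun y => fderiv ℝ (fld θ) (τ, c τ y) (0,1,0))
        (fderiv ℝ (fun q => fderiv ℝ (fld θ) q (0,1,0)) (τ, c τ σ)
          ((0:ℝ), (K1 c (τ, σ), K2 c (τ, σ)))) σ :=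
      hasDerivAt_line ((hTH1.differentiable (by simp)) (τ, c τ σ)) hLn
    have hTH2n : HasDerivAt (fun y => fderiv ℝ (fld θ) (τ, c τ y) (0,0,1))
        (fderiv ℝ (fun q => fderiv ℝ (fld θ) q (0,0,1)) (τ, c τ σ)
          ((0:ℝ), (K1 c (τ, σ), K2 c (τ, σ)))) σ :=
      hasDerivAt_line ((hTH2.differentiable (by simp)) (τ, c τ σ)) hLn
    -- τ-slopes of K1 and K2
    have hK1m : HasDerivAt (fun x => K1 c (x, σ)) (fderiv ℝ (K1 c) (τ, σ) (1,0)) τ :=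
      slice1 ((hK1.differentiable (by simp)) (τ, σ))
    have hK2m : HasDerivAt (fun x => K2 c (x, σ)) (fderiv ℝ (K2 c) (τ, σ) (1,0)) τ :=
      slice1 ((hK2.differentiable (by simp)) (τ, σ))
    -- equality-of-mixed-partials: the τ-slope of K equals the σ-derivative of u∘Q
    have hK1eq : fderiv ℝ (K1 c) (τ, σ) (1,0)
        = fderiv ℝ (fld (c1 uS)) (τ, c τ σ) ((0:ℝ), (K1 c (τ, σ), K2 c (τ, σ))) := by
      have h1 : fderiv ℝ (K1 c) (τ, σ) (1,0)
          = fderiv ℝ (fderiv ℝ (G1 c)) (τ, σ) (1,0) (0,1) :=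
        fderiv_fderiv_apply hG1 (τ, σ) (0,1) (1,0)
      have h2 := snd_symm hG1 (τ, σ) ((1:ℝ),(0:ℝ)) ((0:ℝ),(1:ℝ))
      have h3 : fderiv ℝ (fderiv ℝ (G1 c)) (τ, σ) (0,1) (1,0)
          = fderiv ℝ (fun r => fderiv ℝ (G1 c) r (1,0)) (τ, σ) (0,1) :=
        (fderiv_fderiv_apply hG1 (τ, σ) (1,0) (0,1)).symm
      have h4 : (fun r : ℝ × ℝ => fderiv ℝ (G1 c) r (1,0))
          = fun r => fld (c1 uS) (Qm c r) := funext hadv1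
      have h5 : fderiv ℝ (fun r : ℝ × ℝ => fld (c1 uS) (Qm c r)) (τ, σ) (0,1)
          = fderiv ℝ (fld (c1 uS)) (τ, c τ σ) ((0:ℝ), (K1 c (τ, σ), K2 c (τ, σ))) := by
        have hA : HasDerivAt (fun y => fld (c1 uS) (Qm c (τ, y)))
            (fderiv ℝ (fun r : ℝ × ℝ => fld (c1 uS) (Qm c r)) (τ, σ) (0,1)) σ :=
          slice2 (((hU1.comp hQm).differentiable (by simp)) (τ, σ))
        exact hA.unique hU1n
      rw [h1, h2, h3, h4, h5]
    have hK2eq : fderiv ℝ (K2 c) (τ, σ) (1,0)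
        = fderiv ℝ (fld (c2 uS)) (τ, c τ σ) ((0:ℝ), (K1 c (τ, σ), K2 c (τ, σ))) := by
      have h1 : fderiv ℝ (K2 c) (τ, σ) (1,0)
          = fderiv ℝ (fderiv ℝ (G2 c)) (τ, σ) (1,0) (0,1) :=
        fderiv_fderiv_apply hG2 (τ, σ) (0,1) (1,0)
      have h2 := snd_symm hG2 (τ, σ) ((1:ℝ),(0:ℝ)) ((0:ℝ),(1:ℝ))
      have h3 : fderiv ℝ (fderiv ℝ (G2 c)) (τ, σ) (0,1) (1,0)
          = fderiv ℝ (fun r => fderiv ℝ (G2 c) r (1,0)) (τ, σ) (0,1) :=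
        (fderiv_fderiv_apply hG2 (τ, σ) (1,0) (0,1)).symm
      have h4 : (fun r : ℝ × ℝ => fderiv ℝ (G2 c) r (1,0))
          = fun r => fld (c2 uS) (Qm c r) := funext hadv2
      have h5 : fderiv ℝ (fun r : ℝ × ℝ => fld (c2 uS) (Qm c r)) (τ, σ) (0,1)
          = fderiv ℝ (fld (c2 uS)) (τ, c τ σ) ((0:ℝ), (K1 c (τ, σ), K2 c (τ, σ))) := by
        have hA : HasDerivAt (fun y => fld (c2 uS) (Qm c (τ, y)))
            (fderiv ℝ (fun r : ℝ × ℝ => fld (c2 uS) (Qm c r)) (τ, σ) (0,1)) σ :=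
          slice2 (((hU2.comp hQm).differentiable (by simp)) (τ, σ))
        exact hA.unique hU2n
      rw [h1, h2, h3, h4, h5]
    -- the τ-derivative of Fb along the σ-slice, computed two ways
    have hFstart : HasDerivAt (fun x => Fb uS uT θ c f s (x, σ))
        (FbD uS uT θ c f s (τ, σ)) τ :=
      slice1 ((hFbig.differentiable (by simp)) (τ, σ))
    have hFbm := (((hU1m.sub (((hTm.add (hxm.const_mul f)).const_mul s⁻¹).mul hTH1m)).mul
        hK1m).add ((hU2m.sub (((hTm.add (hxm.const_mul f)).const_mul s⁻¹).mul hTH2m)).mul hK2m))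
    have hFeq := hFstart.unique hFbm
    -- the σ-derivative of Psi along the τ-slice, computed two ways
    have hGstart : HasDerivAt (fun y => PsiF uS uT θ c f g s cp Pi₀' (τ, y))
        (PsiD uS uT θ c f g s cp Pi₀' (τ, σ)) σ :=
      slice2 ((hPsi.differentiable (by simp)) (τ, σ))
    have hGbm := (((((((hU1n.mul hU1n).add (hU2n.mul hU2n)).div_const 2).add
        ((((hTn.add ((hgσ1 τ σ).const_mul f)).mul
          (hTn.add ((hgσ1 τ σ).const_mul f))).div_const 2))).add
        (((hTHn.mul hTHn).const_mul (s⁻¹ * cp * Pi₀')).div_const 2)).sub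
        ((hgσ2 τ σ).const_mul g)).sub
        ((((hgσ1 τ σ).mul (hgσ1 τ σ)).const_mul (f ^ 2)).div_const 2))
    have hGeq := hGstart.unique hGbm
    -- derivative of the θ-equation along the n-line
    have hZline : HasDerivAt (fun y => fderiv ℝ (fld θ) (τ, c τ y) (1,0,0)
        + ((uS τ (c τ y)).1 * fderiv ℝ (fld θ) (τ, c τ y) (0,1,0)
           + (uS τ (c τ y)).2 * fderiv ℝ (fld θ) (τ, c τ y) (0,0,1))
        + s * uT τ (c τ y)) (0 : ℝ) σ := by
      have he : (fun y => fderiv ℝ (fld θ) (τ, c τ y) (1,0,0)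
          + ((uS τ (c τ y)).1 * fderiv ℝ (fld θ) (τ, c τ y) (0,1,0)
             + (uS τ (c τ y)).2 * fderiv ℝ (fld θ) (τ, c τ y) (0,0,1))
          + s * uT τ (c τ y)) = fun _ : ℝ => (0:ℝ) :=
        funext fun y => congrFun hZfun (τ, c τ y)
      rw [he]
      exact hasDerivAt_const σ 0
    have hZeq := hZline.unique
      ((hTH0n.add ((hU1n.mul hTH1n).add (hU2n.mul hTH2n))).add (hTn.const_mul s))
    -- symmetry of the Hessian of θ
    have hswap : fderiv ℝ (fun q => fderiv ℝ (fld θ) q (0,1,0)) (τ, c τ σ)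
          ((1:ℝ), uS τ (c τ σ)) * K1 c (τ, σ)
        + fderiv ℝ (fun q => fderiv ℝ (fld θ) q (0,0,1)) (τ, c τ σ)
          ((1:ℝ), uS τ (c τ σ)) * K2 c (τ, σ)
        = fderiv ℝ (fun q => fderiv ℝ (fld θ) q (1,0,0)) (τ, c τ σ)
            ((0:ℝ), (K1 c (τ, σ), K2 c (τ, σ)))
          + ((uS τ (c τ σ)).1 * fderiv ℝ (fun q => fderiv ℝ (fld θ) q (0,1,0)) (τ, c τ σ)
              ((0:ℝ), (K1 c (τ, σ), K2 c (τ, σ)))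
            + (uS τ (c τ σ)).2 * fderiv ℝ (fun q => fderiv ℝ (fld θ) q (0,0,1)) (τ, c τ σ)
              ((0:ℝ), (K1 c (τ, σ), K2 c (τ, σ)))) := by
      rw [fderiv_fderiv_apply hTH, fderiv_fderiv_apply hTH, fderiv_fderiv_apply hTH,
        fderiv_fderiv_apply hTH, fderiv_fderiv_apply hTH]
      have h1 := clm_decomp (fderiv ℝ (fderiv ℝ (fld θ)) (τ, c τ σ) ((1:ℝ), uS τ (c τ σ)))
        ((0:ℝ), (K1 c (τ, σ), K2 c (τ, σ)))
      have h2 := clm_decomp (fderiv ℝ (fderiv ℝ (fld θ)) (τ, c τ σ)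
        ((0:ℝ), (K1 c (τ, σ), K2 c (τ, σ)))) ((1:ℝ), uS τ (c τ σ))
      have h3 := snd_symm hTH (τ, c τ σ) ((1:ℝ), uS τ (c τ σ))
        ((0:ℝ), (K1 c (τ, σ), K2 c (τ, σ)))
      linear_combination h3 - h1 + h2
    -- directional decompositions
    have hd1 := clm_decomp (fderiv ℝ (fld (c1 uS)) (τ, c τ σ)) ((1:ℝ), uS τ (c τ σ))
    have hd2 := clm_decomp (fderiv ℝ (fld (c2 uS)) (τ, c τ σ)) ((1:ℝ), uS τ (c τ σ))
    have hd3 := clm_decomp (fderiv ℝ (fld uT) (τ, c τ σ)) ((1:ℝ), uS τ (c τ σ))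
    have hg4 := clm_decomp (fderiv ℝ (fld θ) (τ, c τ σ)) ((0:ℝ), (K1 c (τ, σ), K2 c (τ, σ)))
    have h1x := hm1x τ (c τ σ)
    have h1z := hm1z τ (c τ σ)
    have h2' := hm2 τ (c τ σ)
    -- put everything together
    rw [hFeq, hGeq, hK1eq, hK2eq]
    simp only [_root_.Pi.add_apply, _root_.Pi.sub_apply, _root_.Pi.mul_apply]
    linear_combination (K1 c (τ, σ)) * hd1 + (K1 c (τ, σ)) * h1x + (K2 c (τ, σ)) * hd2
      + (K2 c (τ, σ)) * h1z
      + (-(s⁻¹ * (fderiv ℝ (fld θ) (τ, c τ σ) (0,1,0) * K1 c (τ, σ)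
            + fderiv ℝ (fld θ) (τ, c τ σ) (0,0,1) * K2 c (τ, σ)))) * hd3
      + (-(s⁻¹ * (fderiv ℝ (fld θ) (τ, c τ σ) (0,1,0) * K1 c (τ, σ)
            + fderiv ℝ (fld θ) (τ, c τ σ) (0,0,1) * K2 c (τ, σ)))) * h2'
      + (s⁻¹ * (uT τ (c τ σ) + f * (c τ σ).1)) * hZeq
      - (s⁻¹ * (uT τ (c τ σ) + f * (c τ σ).1)) * hswap
      - (s⁻¹ * cp * Pi₀' * θ τ (c τ σ)) * hg4
      + ((uT τ (c τ σ) + f * (c τ σ).1)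
          * fderiv ℝ (fld uT) (τ, c τ σ) ((0:ℝ), (K1 c (τ, σ), K2 c (τ, σ))))
        * (mul_inv_cancel₀ hs)
  -- ====== the integral part ======
  intro t
  -- identify the integrand with Fb
  have hfun : (fun τ => ∫ σ in (0:ℝ)..1,
      dot ((uS τ (c τ σ)).1 - s⁻¹ * (uT τ (c τ σ) + f * (c τ σ).1) * px (θ τ) (c τ σ),
           (uS τ (c τ σ)).2 - s⁻¹ * (uT τ (c τ σ) + f * (c τ σ).1) * pz (θ τ) (c τ σ))
        (deriv (c τ) σ))
      = fun τ => ∫ σ in (0:ℝ)..1, Fb uS uT θ c f s (τ, σ) := by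
    funext τ
    refine intervalIntegral.integral_congr fun σ _ => ?_
    rw [hder τ σ, hpx θ hTH τ (c τ σ), hpz θ hTH τ (c τ σ)]
    simp [dot, Fb, W1, W2, Qm, K1, K2]
  rw [hfun]
  -- continuity facts
  have contFb : Continuous (Fb uS uT θ c f s) := hFbig.continuous
  have contFp : Continuous (FbD uS uT θ c f s) := (contDiff_dfd hFbig (1,0)).continuous
  have contPsiD : Continuous (PsiD uS uT θ c f g s cp Pi₀') :=
    (contDiff_dfd hPsi (0,1)).continuous
  have contθQ : Continuous (fun r : ℝ × ℝ => θ r.1 (c r.1 r.2)) :=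
    ((hTH.comp hQm).continuous)
  have contP1 : Continuous (fun r : ℝ × ℝ => fderiv ℝ (fld Pi) (Qm c r) (0,1,0)) :=
    ((contDiff_dfd hPI (0,1,0)).comp hQm).continuous
  have contP2 : Continuous (fun r : ℝ × ℝ => fderiv ℝ (fld Pi) (Qm c r) (0,0,1)) :=
    ((contDiff_dfd hPI (0,0,1)).comp hQm).continuous
  have contRr : Continuous (fun r : ℝ × ℝ =>
      cp * θ r.1 (c r.1 r.2) * fderiv ℝ (fld Pi) (Qm c r) (0,1,0) * K1 c r
      + cp * θ r.1 (c r.1 r.2) * fderiv ℝ (fld Pi) (Qm c r) (0,0,1) * K2 c r) :=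
    ((((continuous_const.mul contθQ).mul contP1).mul hK1.continuous).add
      (((continuous_const.mul contθQ).mul contP2).mul hK2.continuous))
  have contSliceT : ∀ x : ℝ, Continuous (fun σ => Fb uS uT θ c f s (x, σ)) :=
    fun x => contFb.comp (continuous_const.prodMk continuous_id)
  -- uniform bound for the τ-derivative near t
  obtain ⟨C, hC⟩ := ((isCompact_Icc (a := t - 1) (b := t + 1)).prod
    (isCompact_Icc (a := (0:ℝ)) (b := 1))).exists_bound_of_continuousOn
    contFp.continuousOn
  -- differentiate under the integral sign
  have main := intervalIntegral.hasDerivAt_integral_of_dominated_loc_of_deriv_le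
    (F := fun x σ => Fb uS uT θ c f s (x, σ)) (F' := fun x σ => FbD uS uT θ c f s (x, σ))
    (x₀ := t) (a := 0) (b := 1) (bound := fun _ => C) (μ := MeasureTheory.volume)
    (s := Metric.ball t 1) (Metric.ball_mem_nhds t one_pos)
    (Filter.Eventually.of_forall fun x => ((contSliceT x).aestronglyMeasurable))
    ((contSliceT t).intervalIntegrable 0 1)
    ((contFp.comp (continuous_const.prodMk continuous_id)).aestronglyMeasurable)
    (MeasureTheory.ae_of_all _ (fun σ hσ x hx => by
      rw [Set.uIoc_of_le (by norm_num : (0:ℝ) ≤ 1)] at hσ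
      rw [Real.ball_eq_Ioo] at hx
      exact hC (x, σ) ⟨⟨le_of_lt hx.1, le_of_lt hx.2⟩, ⟨le_of_lt hσ.1, hσ.2⟩⟩))
    (intervalIntegrable_const)
    (MeasureTheory.ae_of_all _ (fun σ hσ x hx =>
      slice1 ((hFbig.differentiable (by simp)) (x, σ))))
  have hmain := main.2
  -- compute the value of the derivative
  have hPsiInt : IntervalIntegrable (fun σ => PsiD uS uT θ c f g s cp Pi₀' (t, σ))
      MeasureTheory.volume 0 1 :=
    (contPsiD.comp (continuous_const.prodMk continuous_id)).intervalIntegrable 0 1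
  have hRrInt : IntervalIntegrable (fun σ =>
      cp * θ t (c t σ) * fderiv ℝ (fld Pi) (Qm c (t, σ)) (0,1,0) * K1 c (t, σ)
      + cp * θ t (c t σ) * fderiv ℝ (fld Pi) (Qm c (t, σ)) (0,0,1) * K2 c (t, σ))
      MeasureTheory.volume 0 1 :=
    (contRr.comp (continuous_const.prodMk continuous_id)).intervalIntegrable 0 1
  have hsplit : (∫ σ in (0:ℝ)..1, FbD uS uT θ c f s (t, σ))
      = (∫ σ in (0:ℝ)..1, PsiD uS uT θ c f g s cp Pi₀' (t, σ))
        - ∫ σ in (0:ℝ)..1,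
            (cp * θ t (c t σ) * fderiv ℝ (fld Pi) (Qm c (t, σ)) (0,1,0) * K1 c (t, σ)
             + cp * θ t (c t σ) * fderiv ℝ (fld Pi) (Qm c (t, σ)) (0,0,1) * K2 c (t, σ)) := by
    rw [← intervalIntegral.integral_sub hPsiInt hRrInt]
    exact intervalIntegral.integral_congr fun σ _ => key t σ
  have hGzero : (∫ σ in (0:ℝ)..1, PsiD uS uT θ c f g s cp Pi₀' (t, σ)) = 0 := by
    have hFTC := intervalIntegral.integral_eq_sub_of_hasDerivAt
      (f := fun y => PsiF uS uT θ c f g s cp Pi₀' (t, y))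
      (f' := fun σ => PsiD uS uT θ c f g s cp Pi₀' (t, σ)) (a := 0) (b := 1)
      (fun σ _ => slice2 ((hPsi.differentiable (by simp)) (t, σ))) hPsiInt
    rw [hFTC]
    simp [PsiF, Qm, hcl t]
  have hRr : (∫ σ in (0:ℝ)..1,
      (cp * θ t (c t σ) * fderiv ℝ (fld Pi) (Qm c (t, σ)) (0,1,0) * K1 c (t, σ)
       + cp * θ t (c t σ) * fderiv ℝ (fld Pi) (Qm c (t, σ)) (0,0,1) * K2 c (t, σ)))
      = ∫ σ in (0:ℝ)..1,
          dot (cp * θ t (c t σ) * px (Pi t) (c t σ), cp * θ t (c t σ) * pz (Pi t) (c t σ))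
            (deriv (c t) σ) := by
    refine intervalIntegral.integral_congr fun σ _ => ?_
    rw [hder t σ, hpx Pi hPI t (c t σ), hpz Pi hPI t (c t σ)]
    simp [dot, Qm]
  rw [hsplit, hGzero, zero_sub, hRr] at hmain
  exact hmain
end
end
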